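/- arXiv:1712.04545 — 4 statements merged into one kernel-verified Lean document; each statement's English description precedes it below -/
import Mathlib

section
/- Let M be a compact, connected, locally path-connected metric space that is semi-locally simply connected, and let x ∈ M and L ≥ 0. Then the set of elements of the fundamental group π₁(M, x) that are represented by some loop at x of length at most L is finite. -/
open scoped unitInterval

attribute [local instance] Path.Homotopic.setoid

/-- The length of a path in a metric space: its total variation, i.e. the supremum over
partitions `0 = t₀ ≤ t₁ ≤ ⋯ ≤ t_k = 1` of `Σᵢ d(γ(tᵢ₋₁), γ(tᵢ))`. -/
noncomputable def pathLength {M : Type*} [MetricSpace M] {a b : M} (γ : Path a b) : ENNReal :=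
  eVariationOn γ Set.univ

/-- The element of the fundamental group represented by a loop based at `x`. -/
noncomputable def loopClass {M : Type*} [TopologicalSpace M] {x : M} (γ : Path x x) :
    FundamentalGroup M x :=
  FundamentalGroup.fromPath (X := TopCat.of M) ⟦γ⟧

section Aux

open CategoryTheory

variable {M : Type*} [TopologicalSpace M] {x : M}

/-- An affine segment of a loop, using the extension of the path to `ℝ`. -/
noncomputable def segP (γ : Path x x) (u v : ℝ) : Path (γ.extend u) (γ.extend v) where
  toFun θ := γ.extend (u + θ * (v - u))
  continuous_toFun := γ.continuous_extend.comp (by continuity)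
  source' := by norm_num
  target' := by norm_num

@[simp] lemma segP_apply (γ : Path x x) (u v : ℝ) (θ : I) :
    segP γ u v θ = γ.extend (u + θ * (v - u)) := rfl

/-- The tail of a loop from time `u` to time `1`. -/
noncomputable def tailP (γ : Path x x) (u : ℝ) {p : M} (hp : γ.extend u = p) : Path p x where
  toFun θ := γ.extend (u + θ * (1 - u))
  continuous_toFun := γ.continuous_extend.comp (by continuity)
  source' := by rw [← hp]; norm_num
  target' := by norm_num

@[simp] lemma tailP_apply (γ : Path x x) (u : ℝ) {p : M} (hp : γ.extend u = p) (θ : I) :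
    tailP γ u hp θ = γ.extend (u + θ * (1 - u)) := rfl

/-- Two paths which are both of the form `γ.extend ∘ f` with matching endpoints of the
reparametrizations are homotopic rel endpoints. -/
theorem homotopic_of_extend_eq (γ : Path x x) {c d : M} (p q : Path c d)
    (f g : I → ℝ) (hf : Continuous f) (hg : Continuous g)
    (hp : ∀ θ, p θ = γ.extend (f θ)) (hq : ∀ θ, q θ = γ.extend (g θ))
    (h0 : f 0 = g 0) (h1 : f 1 = g 1) : p.Homotopic q := by
  refine ⟨⟨⟨⟨fun st => γ.extend ((1 - (st.1 : ℝ)) * f st.2 + (st.1 : ℝ) * g st.2), ?_⟩, ?_, ?_⟩,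
    ?_⟩⟩
  · exact γ.continuous_extend.comp
      (((continuous_const.sub (continuous_subtype_val.comp continuous_fst)).mul
        (hf.comp continuous_snd)).add
        ((continuous_subtype_val.comp continuous_fst).mul (hg.comp continuous_snd)))
  · intro θ
    simp [hp θ]
  · intro θ
    simp [hq θ]
  · intro s θ hθ
    rcases hθ with h | h
    · subst h
      show γ.extend ((1 - (s : ℝ)) * f 0 + (s : ℝ) * g 0) = p 0
      rw [hp 0, ← h0]
      congr 1
      ring
    · simp only [Set.mem_singleton_iff] at h
      subst h
      show γ.extend ((1 - (s : ℝ)) * f 1 + (s : ℝ) * g 1) = p 1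
      rw [hp 1, ← h1]
      congr 1
      ring

/-- A path class as a morphism in the fundamental groupoid. -/
noncomputable def homOf {a b : M} (P : Path a b) :
    FundamentalGroupoid.mk a ⟶ FundamentalGroupoid.mk b := ⟦P⟧

lemma hom_trans {a b c : M} (P : Path a b) (Q : Path b c) :
    homOf (P.trans Q) = homOf P ≫ homOf Q :=
  Path.Homotopic.Quotient.mk_trans P Q

lemma hom_symm {a b : M} (P : Path a b) :
    homOf P.symm = Groupoid.inv (homOf P) := rfl

lemma hom_id (a : M) : homOf (Path.refl a) = 𝟙 (FundamentalGroupoid.mk a) := rfl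

lemma homOf_congr {a b : M} {P Q : Path a b}
    (h : (⟦P⟧ : Path.Homotopic.Quotient a b) = ⟦Q⟧) : homOf P = homOf Q := h

/-- Splitting a tail path at an intermediate time. -/
theorem tail_split (γ : Path x x) (u v : ℝ) :
    homOf (tailP γ u rfl) = homOf (segP γ u v) ≫ homOf (tailP γ v rfl) := by
  rw [← hom_trans]
  refine homOf_congr (Quotient.sound (homotopic_of_extend_eq γ _ _
    (fun θ => u + (θ : ℝ) * (1 - u))
    (fun θ => if (θ : ℝ) ≤ 1/2 then u + (2 * (θ : ℝ)) * (v - u) else v + (2 * (θ : ℝ) - 1) * (1 - v))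
    (by continuity) ?_ (fun θ => rfl) ?_ ?_ ?_))
  · apply Continuous.if_le
    · continuity
    · continuity
    · continuity
    · continuity
    · intro θ hθ
      rw [hθ]
      norm_num
  · intro θ
    simp only [Path.trans_apply]
    split_ifs with h <;> rfl
  · norm_num
  · norm_num

end Aux

section Chain

open CategoryTheory

variable {M : Type*} [MetricSpace M] {x : M}

/-- The key homotopy lemma: two loops that track a common chain of points are homotopic. -/
theorem chain_determines {ε εs η δ : ℝ}
    (hεs : 0 < εs)
    (Hε : ∀ (p q : M) (γ : Path q q), (∀ θ : I, dist (γ θ) p < ε) →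
      (⟦γ⟧ : Path.Homotopic.Quotient q q) = ⟦Path.refl q⟧)
    (Hη : ∀ p q : M, dist p q < η → ∃ P : Path p q, ∀ θ : I, dist (P θ) p < εs)
    (hδη : 2 * δ ≤ η) (hτε : εs + δ < ε) (hδε : δ < ε)
    (N : ℕ) (α β : Path x x) (c : ℕ → M) (s t : ℕ → ℝ)
    (hs0 : s 0 = 0) (hsN : s N = 1) (ht0 : t 0 = 0) (htN : t N = 1)
    (hsc : ∀ k ≤ N, dist (α.extend (s k)) (c k) < δ)
    (htc : ∀ k ≤ N, dist (β.extend (t k)) (c k) < δ)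
    (hseg : ∀ j < N, ∀ θ : I, dist (α.extend (s j + θ * (s (j+1) - s j))) (c j) < δ)
    (hteg : ∀ j < N, ∀ θ : I, dist (β.extend (t j + θ * (t (j+1) - t j))) (c j) < δ) :
    (⟦α⟧ : Path.Homotopic.Quotient x x) = ⟦β⟧ := by
  have Q : ∀ (d k : ℕ), k + d = N → ∀ (p q : M) (hp : α.extend (s k) = p)
      (hq : β.extend (t k) = q) (u : Path p q), (∀ θ : I, dist (u θ) (c k) < εs + δ) →
      homOf (tailP α (s k) hp) = homOf u ≫ homOf (tailP β (t k) hq) := by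
    intro d
    induction d with
    | zero =>
      intro k hk p q hp hq u hu
      have hk' : k = N := by omega
      subst hk'
      have hpx : x = p := by rw [← hp, hsN, Path.extend_one]
      subst hpx
      have hqx : x = q := by rw [← hq, htN, Path.extend_one]
      subst hqx
      have hTA : tailP α (s k) hp = Path.refl x := by
        ext θ
        rw [tailP_apply, hsN]
        simp
      have hTB : tailP β (t k) hq = Path.refl x := by
        ext θ
        rw [tailP_apply, htN]
        simp
      rw [hTA, hTB]
      have hU : (⟦u⟧ : Path.Homotopic.Quotient x x) = ⟦Path.refl x⟧ :=
        Hε (c k) x u (fun θ => lt_trans (hu θ) hτε)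
      rw [homOf_congr hU, _root_.hom_id, Category.id_comp]
    | succ d ih =>
      intro k hk p q hp hq u hu
      subst hp; subst hq
      have hkN : k < N := by omega
      have hk1 : k + 1 ≤ N := hkN
      obtain ⟨u', hu'⟩ := Hη (α.extend (s (k+1))) (β.extend (t (k+1))) (by
        have h1 := hsc (k+1) hk1
        have h2 := htc (k+1) hk1
        have h3 := dist_triangle_right (α.extend (s (k+1))) (β.extend (t (k+1))) (c (k+1))
        linarith)
      have hu'c : ∀ θ : I, dist (u' θ) (c (k+1)) < εs + δ := by
        intro θ
        have h1 := hu' θ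
        have h2 := hsc (k+1) hk1
        have h3 := dist_triangle (u' θ) (α.extend (s (k+1))) (c (k+1))
        linarith
      have IH := ih (k+1) (by omega) _ _ rfl rfl u' hu'c
      set A := segP α (s k) (s (k+1)) with hA
      set B := segP β (t k) (t (k+1)) with hB
      set Λ := (A.trans u').trans (B.symm.trans u.symm) with hΛ
      have hΛnull : (⟦Λ⟧ : Path.Homotopic.Quotient _ _) = ⟦Path.refl (α.extend (s k))⟧ := by
        apply Hε (c k)
        intro θ
        have hmem : Λ θ ∈ (Set.range ⇑A ∪ Set.range ⇑u') ∪ (Set.range ⇑B ∪ Set.range ⇑u) := by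
          have h : Λ θ ∈ Set.range ⇑Λ := Set.mem_range_self θ
          rw [hΛ, Path.trans_range, Path.trans_range, Path.trans_range, Path.symm_range,
            Path.symm_range] at h
          exact h
        rcases hmem with (⟨θ', hθ'⟩ | ⟨θ', hθ'⟩) | (⟨θ', hθ'⟩ | ⟨θ', hθ'⟩) <;> rw [← hθ']
        · rw [hA, segP_apply]
          exact lt_trans (hseg k hkN θ') hδε
        · have he1 : dist (α.extend (s (k+1))) (c k) < δ := by
            have h := hseg k hkN 1
            rw [show s k + ((1:I):ℝ) * (s (k+1) - s k) = s (k+1) by push_cast; ring] at h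
            exact h
          have h3 := dist_triangle (u' θ') (α.extend (s (k+1))) (c k)
          have h1 := hu' θ'
          linarith
        · rw [hB, segP_apply]
          exact lt_trans (hteg k hkN θ') hδε
        · exact lt_trans (hu θ') hτε
      have hΛ2 : (homOf A ≫ homOf u') ≫ (Groupoid.inv (homOf B) ≫ Groupoid.inv (homOf u))
          = 𝟙 _ := by
        rw [← hom_symm, ← hom_symm, ← hom_trans, ← hom_trans, ← hom_trans, homOf_congr hΛnull,
          _root_.hom_id]
      have hcancel : (Groupoid.inv (homOf B) ≫ Groupoid.inv (homOf u))
          ≫ (homOf u ≫ homOf B) = 𝟙 _ := by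
        rw [Category.assoc, ← Category.assoc (Groupoid.inv (homOf u)) (homOf u) (homOf B),
          Groupoid.inv_comp, Category.id_comp, Groupoid.inv_comp]
      have key : homOf A ≫ homOf u' = homOf u ≫ homOf B := by
        calc homOf A ≫ homOf u'
            = ((homOf A ≫ homOf u') ≫ (Groupoid.inv (homOf B) ≫ Groupoid.inv (homOf u)))
              ≫ (homOf u ≫ homOf B) := by
              rw [Category.assoc, hcancel, Category.comp_id]
          _ = homOf u ≫ homOf B := by rw [hΛ2, Category.id_comp]
      calc homOf (tailP α (s k) rfl)
          = homOf A ≫ homOf (tailP α (s (k+1)) rfl) := tail_split α (s k) (s (k+1))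
        _ = homOf A ≫ (homOf u' ≫ homOf (tailP β (t (k+1)) rfl)) := by rw [IH]
        _ = (homOf A ≫ homOf u') ≫ homOf (tailP β (t (k+1)) rfl) := by rw [Category.assoc]
        _ = (homOf u ≫ homOf B) ≫ homOf (tailP β (t (k+1)) rfl) := by rw [key]
        _ = homOf u ≫ (homOf B ≫ homOf (tailP β (t (k+1)) rfl)) := by rw [Category.assoc]
        _ = homOf u ≫ homOf (tailP β (t k) rfl) := by rw [← tail_split β (t k) (t (k+1))]
  have hp0 : α.extend (s 0) = x := by rw [hs0, Path.extend_zero]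
  have hq0 : β.extend (t 0) = x := by rw [ht0, Path.extend_zero]
  have hu0 : ∀ θ : I, dist ((Path.refl x) θ) (c 0) < εs + δ := by
    intro θ
    have h1 := hsc 0 (Nat.zero_le N)
    rw [hp0] at h1
    simpa using by linarith
  have main := Q N 0 (by omega) x x hp0 hq0 (Path.refl x) hu0
  have hTα : tailP α (s 0) hp0 = α := by
    ext θ
    rw [tailP_apply, hs0]
    norm_num [Path.extend_extends']
  have hTβ : tailP β (t 0) hq0 = β := by
    ext θ
    rw [tailP_apply, ht0]
    norm_num [Path.extend_extends']
  rw [hTα, hTβ, _root_.hom_id, Category.id_comp] at main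
  exact main

end Chain

section Extract

variable {M : Type*} [MetricSpace M] {x : M}

theorem exists_good_partition [CompactSpace M] (γ : Path x x) {L δ' : ℝ} (hL : 0 ≤ L)
    (hδ' : 0 < δ') (hlen : eVariationOn (⇑γ) Set.univ ≤ ENNReal.ofReal L) {Nb : ℕ}
    (hNb : L < Nb * δ') :
    ∃ s : ℕ → ℝ, s 0 = 0 ∧ (∀ j, 2 * Nb ≤ j → s j = 1) ∧
      ∀ j, ∀ θ : I, dist (γ.extend (s j + θ * (s (j+1) - s j))) (γ.extend (s j)) < 3 * δ' / 2 := by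
  classical
  obtain ⟨ρ, hρ, hfine⟩ : ∃ ρ > 0, ∀ r r' : ℝ, |r - r'| < ρ →
      dist (γ.extend r) (γ.extend r') < δ' / 2 := by
    have huc : UniformContinuous ⇑γ := CompactSpace.uniformContinuous_of_continuous γ.continuous
    rw [Metric.uniformContinuous_iff] at huc
    obtain ⟨ρ, hρ, h⟩ := huc (δ'/2) (by positivity)
    refine ⟨ρ, hρ, fun r r' hr => ?_⟩
    have hd : dist (Set.projIcc (0:ℝ) 1 zero_le_one r) (Set.projIcc (0:ℝ) 1 zero_le_one r') < ρ := by
      have hlip := (LipschitzWith.projIcc (zero_le_one (α := ℝ))).dist_le_mul r r'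
      simp only [NNReal.coe_one, one_mul] at hlip
      calc dist (Set.projIcc (0:ℝ) 1 zero_le_one r) (Set.projIcc (0:ℝ) 1 zero_le_one r')
          ≤ dist r r' := hlip
        _ = |r - r'| := Real.dist_eq r r'
        _ < ρ := hr
    exact h hd
  obtain ⟨Kr, hKr⟩ := exists_nat_gt (1/ρ)
  have hK0 : 0 < Kr := by
    have h0 : (0:ℝ) < Kr := lt_trans (by positivity) hKr
    exact_mod_cast h0
  have hKpos : (0:ℝ) < Kr := by exact_mod_cast hK0
  have hKρ : (1:ℝ)/Kr < ρ := by
    rw [div_lt_iff₀ hKpos]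
    have := (div_lt_iff₀ hρ).mp hKr
    linarith
  set m : ℕ → ℝ := fun i => (i : ℝ) / Kr with hm
  set y : ℕ → M := fun i => γ.extend (m i) with hy
  have hmmono : ∀ {i i' : ℕ}, i ≤ i' → m i ≤ m i' := by
    intro i i' h
    rw [hm]
    dsimp only
    gcongr <;> exact_mod_cast h
  have hm0 : ∀ i : ℕ, 0 ≤ m i := by
    intro i
    rw [hm]
    positivity
  have hfinestep : ∀ a : ℕ, dist (y (a+1)) (y a) < δ'/2 := by
    intro a
    apply hfine
    have h1 : m (a+1) - m a = 1/Kr := by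
      rw [hm]
      push_cast
      field_simp
      ring
    rw [h1, abs_of_nonneg (by positivity)]
    exact hKρ
  set Fs : ℕ → Finset ℕ := fun a => (Finset.range (Kr+1)).filter
      (fun b => a ≤ b ∧ ∀ l ∈ Finset.Icc a b, dist (y l) (y a) < δ') with hFs
  have hself : ∀ a : ℕ, a ≤ Kr → a ∈ Fs a := by
    intro a ha
    rw [hFs]
    simp only [Finset.mem_filter, Finset.mem_range]
    refine ⟨by omega, le_refl a, ?_⟩
    intro l hl
    simp only [Finset.mem_Icc] at hl
    have h : l = a := by omega
    rw [h]
    simpa using hδ'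
  set next : ℕ → ℕ := fun a => if h : a ≤ Kr then (Fs a).max' ⟨a, hself a h⟩ else a with hnext
  have hnext_eq : ∀ a (h : a ≤ Kr), next a = (Fs a).max' ⟨a, hself a h⟩ := by
    intro a h
    rw [hnext]
    simp [dif_pos h]
  have hnext_mem : ∀ a, a ≤ Kr →
      next a ≤ Kr ∧ a ≤ next a ∧ ∀ l ∈ Finset.Icc a (next a), dist (y l) (y a) < δ' := by
    intro a ha
    have hmem : next a ∈ Fs a := by
      rw [hnext_eq a ha]
      exact Finset.max'_mem _ _
    rw [hFs] at hmem
    simp only [Finset.mem_filter, Finset.mem_range] at hmem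
    exact ⟨by omega, hmem.2.1, hmem.2.2⟩
  have hnext_succ : ∀ a, a < Kr → a + 1 ≤ next a := by
    intro a ha
    have hmem : a + 1 ∈ Fs a := by
      rw [hFs]
      simp only [Finset.mem_filter, Finset.mem_range]
      refine ⟨by omega, by omega, ?_⟩
      intro l hl
      simp only [Finset.mem_Icc] at hl
      rcases (by omega : l = a ∨ l = a + 1) with h | h
      · rw [h]
        simpa using hδ'
      · rw [h]
        exact lt_trans (hfinestep a) (by linarith)
    rw [hnext_eq a (le_of_lt ha)]
    exact Finset.le_max' _ _ hmem
  have hnext_max : ∀ a, a ≤ Kr → next a < Kr → δ' ≤ dist (y (next a + 1)) (y a) := by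
    intro a ha hlt
    by_contra hcon
    push_neg at hcon
    have hval := (hnext_mem a ha).2.2
    have hale := (hnext_mem a ha).2.1
    have hmem : next a + 1 ∈ Fs a := by
      rw [hFs]
      simp only [Finset.mem_filter, Finset.mem_range]
      refine ⟨by omega, by omega, ?_⟩
      intro l hl
      simp only [Finset.mem_Icc] at hl
      rcases Nat.lt_or_ge l (next a + 1) with h | h
      · exact hval l (Finset.mem_Icc.mpr ⟨hl.1, by omega⟩)
      · have hh : l = next a + 1 := by omega
        rw [hh]
        exact hcon
    have hle : next a + 1 ≤ next a := by
      have hh := Finset.le_max' (Fs a) (next a + 1) hmem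
      rwa [← hnext_eq a ha] at hh
    omega
  set Iq : ℕ → ℕ := fun j => next^[j] 0 with hIq
  have hIsucc : ∀ j, Iq (j+1) = next (Iq j) := by
    intro j
    rw [hIq]
    exact Function.iterate_succ_apply' next j 0
  have hI0 : Iq 0 = 0 := rfl
  have hIle : ∀ j, Iq j ≤ Kr := by
    intro j
    induction j with
    | zero => omega
    | succ j ihj =>
      rw [hIsucc j]
      exact (hnext_mem _ ihj).1
  have hImono : ∀ j, Iq j ≤ Iq (j+1) := by
    intro j
    rw [hIsucc j]
    exact (hnext_mem _ (hIle j)).2.1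
  have hIK : ∀ j i, j ≤ i → Iq j = Kr → Iq i = Kr := by
    intro j i hji hj
    induction i, hji using Nat.le_induction with
    | base => exact hj
    | succ i hji ihi =>
      rw [hIsucc i, ihi]
      have h1 := (hnext_mem Kr le_rfl).1
      have h2 := (hnext_mem Kr le_rfl).2.1
      omega
  have hNb0 : 0 < Nb := by
    by_contra h
    push_neg at h
    have hh : Nb = 0 := by omega
    rw [hh] at hNb
    simp at hNb
    linarith
  have hreach : Iq (2*Nb) = Kr := by
    by_contra hne
    have hltK : ∀ j ≤ 2*Nb, Iq j < Kr := by
      intro j hj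
      rcases Nat.lt_or_ge (Iq j) Kr with h | h
      · exact h
      · have hh : Iq j = Kr := le_antisymm (hIle j) h
        exact absurd (hIK j (2*Nb) hj hh) hne
    set w : ℕ → ℕ := fun l => if l % 2 = 0 then Iq l else Iq l + 1 with hw
    have hwle : ∀ l, l ≤ 2*Nb - 1 → w l ≤ Kr := by
      intro l hl
      rw [hw]
      dsimp only
      split_ifs
      · exact hIle l
      · have := hltK l (by omega)
        omega
    have hwmono : ∀ l, l + 1 ≤ 2*Nb - 1 → w l ≤ w (l+1) := by
      intro l hl
      rw [hw]
      dsimp only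
      rcases Nat.even_or_odd l with he | ho
      · have hl2 : l % 2 = 0 := Nat.even_iff.mp he
        rw [if_pos hl2, if_neg (by omega)]
        have := hImono l
        omega
      · have hl2 : l % 2 = 1 := Nat.odd_iff.mp ho
        rw [if_neg (by omega)]
        have hstep : Iq l + 1 ≤ Iq (l+1) := by
          rw [hIsucc l]
          exact hnext_succ _ (hltK l (by omega))
        split_ifs
        · omega
        · omega
    have humem : ∀ i : ℕ, i ≤ Kr → m i ∈ I := by
      intro i hi
      constructor
      · exact hm0 i
      · rw [hm]
        dsimp only
        rw [div_le_one hKpos]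
        exact_mod_cast hi
    set u : ℕ → I := fun l => ⟨m (w (min l (2*Nb - 1))), humem _ (hwle _ (min_le_right _ _))⟩
      with hu
    have humono : Monotone u := by
      apply monotone_nat_of_le_succ
      intro l
      rw [hu]
      dsimp only
      rw [Subtype.mk_le_mk]
      rcases le_or_gt (l+1) (2*Nb-1) with h | h
      · rw [min_eq_left (by omega), min_eq_left h]
        exact hmmono (hwmono l h)
      · rw [min_eq_right (by omega), min_eq_right (by omega)]
    have hsum := eVariationOn.sum_le (f := ⇑γ) (n := 2*Nb - 1) humono (fun i => Set.mem_univ _)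
    have hval : ∀ i : ℕ, i ≤ 2*Nb - 1 → γ (u i) = y (w i) := by
      intro i hi
      have hmin : min i (2*Nb-1) = i := min_eq_left hi
      have hcoe : ((u i : I) : ℝ) = m (w i) := by
        rw [hu]
        dsimp only
        rw [hmin]
      have hue : u i = ⟨m (w i), by rw [← hcoe]; exact (u i).2⟩ := Subtype.ext hcoe
      rw [hue]
      simp only [hy]
      exact (Path.extend_apply γ _).symm
    have heach : ∀ j, j < Nb → ENNReal.ofReal δ' ≤ edist (γ (u (2*j+1))) (γ (u (2*j))) := by
      intro j hj
      have h2j : 2*j ≤ 2*Nb - 1 := by omega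
      have h2j1 : 2*j+1 ≤ 2*Nb - 1 := by omega
      rw [hval _ h2j1, hval _ h2j]
      have hwj : w (2*j) = Iq (2*j) := by
        rw [hw]
        dsimp only
        rw [if_pos (by omega)]
      have hwj1 : w (2*j+1) = Iq (2*j+1) + 1 := by
        rw [hw]
        dsimp only
        rw [if_neg (by omega)]
      rw [hwj, hwj1]
      have hnm : δ' ≤ dist (y (Iq (2*j+1) + 1)) (y (Iq (2*j))) := by
        have h1 := hnext_max (Iq (2*j)) (hIle _) (by rw [← hIsucc]; exact hltK (2*j+1) (by omega))
        rwa [← hIsucc] at h1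
      rw [edist_dist]
      exact ENNReal.ofReal_le_ofReal hnm
    have hinj : ∀ a ∈ Finset.range Nb, ∀ b ∈ Finset.range Nb, 2*a = 2*b → a = b := by
      intro a _ b _ h
      omega
    have hlow : (Nb : ENNReal) * ENNReal.ofReal δ'
        ≤ ∑ i ∈ Finset.range (2*Nb - 1), edist (γ (u (i+1))) (γ (u i)) := by
      calc (Nb : ENNReal) * ENNReal.ofReal δ'
          = ∑ j ∈ Finset.range Nb, ENNReal.ofReal δ' := by
            rw [Finset.sum_const, nsmul_eq_mul, Finset.card_range]
        _ ≤ ∑ j ∈ Finset.range Nb, edist (γ (u (2*j+1))) (γ (u (2*j))) := by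
            apply Finset.sum_le_sum
            intro j hj
            exact heach j (Finset.mem_range.mp hj)
        _ = ∑ i ∈ (Finset.range Nb).image (fun j => 2*j), edist (γ (u (i+1))) (γ (u i)) := by
            rw [Finset.sum_image hinj]
        _ ≤ ∑ i ∈ Finset.range (2*Nb - 1), edist (γ (u (i+1))) (γ (u i)) := by
            apply Finset.sum_le_sum_of_subset
            intro i hi
            simp only [Finset.mem_image, Finset.mem_range] at hi
            obtain ⟨j, hj, rfl⟩ := hi
            exact Finset.mem_range.mpr (by omega)
    have hfinal : ENNReal.ofReal ((Nb:ℝ) * δ') ≤ ENNReal.ofReal L := by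
      rw [ENNReal.ofReal_mul (by positivity), ENNReal.ofReal_natCast]
      exact le_trans hlow (le_trans hsum hlen)
    have : (Nb:ℝ) * δ' ≤ L := (ENNReal.ofReal_le_ofReal_iff hL).mp hfinal
    linarith
  refine ⟨fun j => m (Iq j), ?_, ?_, ?_⟩
  · show m (Iq 0) = 0
    rw [hI0, hm]
    simp
  · intro j hj
    show m (Iq j) = 1
    rw [hIK (2*Nb) j hj hreach, hm]
    dsimp only
    rw [div_self (ne_of_gt hKpos)]
  · intro j θ
    show dist (γ.extend (m (Iq j) + θ * (m (Iq (j+1)) - m (Iq j)))) (γ.extend (m (Iq j)))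
      < 3 * δ' / 2
    have hab : Iq j ≤ Iq (j+1) := hImono j
    have hmab : m (Iq j) ≤ m (Iq (j+1)) := hmmono hab
    set r : ℝ := m (Iq j) + θ * (m (Iq (j+1)) - m (Iq j)) with hr
    have hθ0 : (0:ℝ) ≤ θ := θ.2.1
    have hθ1 : (θ:ℝ) ≤ 1 := θ.2.2
    have hr1 : m (Iq j) ≤ r := by
      rw [hr]
      nlinarith
    have hr2 : r ≤ m (Iq (j+1)) := by
      rw [hr]
      nlinarith
    have hr0 : 0 ≤ r := le_trans (hm0 _) hr1
    set l : ℕ := Nat.floor (r * Kr) with hl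
    have hal : Iq j ≤ l := by
      apply Nat.le_floor
      rw [hm] at hr1
      dsimp only at hr1
      rw [div_le_iff₀ hKpos] at hr1
      linarith
    have hlb : l ≤ Iq (j+1) := by
      have h1 : (l:ℝ) ≤ r * Kr := Nat.floor_le (by positivity)
      have h2 : r * Kr ≤ Iq (j+1) := by
        rw [hm] at hr2
        dsimp only at hr2
        rw [le_div_iff₀ hKpos] at hr2
        linarith
      exact_mod_cast le_trans h1 h2
    have hclose : |r - m l| < ρ := by
      have h1 : (l:ℝ) ≤ r * Kr := Nat.floor_le (by positivity)
      have h2 : r * Kr < l + 1 := Nat.lt_floor_add_one (r * Kr)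
      have h3 : m l ≤ r := by
        rw [hm]
        dsimp only
        rw [div_le_iff₀ hKpos]
        linarith
      rw [abs_of_nonneg (by linarith)]
      have h4 : r - m l < 1/Kr := by
        rw [hm]
        dsimp only
        rw [sub_lt_iff_lt_add, ← add_div, lt_div_iff₀ hKpos]
        linarith [mul_comm r (Kr:ℝ)]
      linarith
    have hd1 : dist (γ.extend r) (y l) < δ'/2 := by
      rw [hy]
      exact hfine _ _ hclose
    have hd2 : dist (y l) (y (Iq j)) < δ' := by
      have hIs := hIsucc j
      exact (hnext_mem (Iq j) (hIle j)).2.2 l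
        (Finset.mem_Icc.mpr ⟨hal, by rw [← hIs]; exact hlb⟩)
    have htri := dist_triangle (γ.extend r) (y l) (y (Iq j))
    have hyj : y (Iq j) = γ.extend (m (Iq j)) := by rw [hy]
    rw [hyj] at htri hd2
    linarith

end Extract

/-- In a compact, connected, locally path-connected, semi-locally simply connected metric
space, only finitely many elements of the fundamental group are represented by loops at the
basepoint of length at most `L`. -/
theorem finite_short_loop_classes {M : Type*} [MetricSpace M] [CompactSpace M]
    [ConnectedSpace M] [LocallyPathConnectedSpace M]
    (hslsc : ∀ p : M, ∃ U : Set M, IsOpen U ∧ p ∈ U ∧ ∀ (q : M) (γ : Path q q),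
      (∀ t : I, γ t ∈ U) → (⟦γ⟧ : Path.Homotopic.Quotient q q) = ⟦Path.refl q⟧)
    (x : M) (L : ℝ) (hL : 0 ≤ L) :
    {g : FundamentalGroup M x |
      ∃ γ : Path x x, pathLength γ ≤ ENNReal.ofReal L ∧ g = loopClass γ}.Finite := by
  classical
  obtain ⟨ε, hε, Hε⟩ : ∃ ε > 0, ∀ (p q : M) (γ : Path q q), (∀ θ : I, dist (γ θ) p < ε) →
      (⟦γ⟧ : Path.Homotopic.Quotient q q) = ⟦Path.refl q⟧ := by
    choose U hUopen hUmem hUnull using hslsc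
    obtain ⟨ε, hε, hball⟩ := lebesgue_number_lemma_of_metric isCompact_univ hUopen
      (fun z _ => Set.mem_iUnion.mpr ⟨z, hUmem z⟩)
    refine ⟨ε, hε, fun p q γ hγ => ?_⟩
    obtain ⟨i, hi⟩ := hball p (Set.mem_univ p)
    exact hUnull i q γ (fun θ => hi (Metric.mem_ball.mpr (hγ θ)))
  obtain ⟨η, hη, Hη⟩ : ∃ η > 0, ∀ p q : M, dist p q < η →
      ∃ P : Path p q, ∀ θ : I, dist (P θ) p < ε/4 := by
    have h8 : 0 < ε/8 := by linarith
    obtain ⟨η, hη, hball⟩ := lebesgue_number_lemma_of_metric (isCompact_univ : IsCompact (Set.univ : Set M))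
      (c := fun z => pathComponentIn (Metric.ball z (ε/8)) z)
      (fun z => Metric.isOpen_ball.pathComponentIn z)
      (fun z _ => Set.mem_iUnion.mpr ⟨z, mem_pathComponentIn_self (Metric.mem_ball_self h8)⟩)
    refine ⟨η, hη, fun p q hpq => ?_⟩
    obtain ⟨z, hz⟩ := hball p (Set.mem_univ p)
    have hppc : p ∈ pathComponentIn (Metric.ball z (ε/8)) z := hz (Metric.mem_ball_self hη)
    have hqpc : q ∈ pathComponentIn (Metric.ball z (ε/8)) z := by
      apply hz
      rw [Metric.mem_ball, dist_comm]
      exact hpq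
    have hpc := isPathConnected_pathComponentIn (Metric.mem_ball_self h8) (x := z)
    obtain ⟨P, hP⟩ := hpc.joinedIn p hppc q hqpc
    refine ⟨P, fun θ => ?_⟩
    have h1 := pathComponentIn_subset (hP θ)
    have h2 := pathComponentIn_subset hppc
    rw [Metric.mem_ball] at h1 h2
    have h3 := dist_triangle (P θ) z p
    rw [dist_comm z p] at h3
    linarith
  set εs := ε/4 with hεs
  set δ' : ℝ := min (η/2) (ε/2) / 4 with hδ'
  have hmin0 : 0 < min (η/2) (ε/2) := lt_min (by linarith) (by linarith)
  have hδ'0 : 0 < δ' := by rw [hδ']; linarith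
  obtain ⟨F, hFsub, hFfin, hFcov⟩ :=
    finite_cover_balls_of_compact (isCompact_univ (X := M)) (half_pos hδ'0)
  have hnet : ∀ p : M, ∃ f, f ∈ F ∧ dist p f < δ'/2 := by
    intro p
    have hcov := hFcov (Set.mem_univ p)
    simp only [Set.mem_iUnion] at hcov
    obtain ⟨f, hf, hpf⟩ := hcov
    exact ⟨f, hf, Metric.mem_ball.mp hpf⟩
  choose net hnetF hnetd using hnet
  set Nb : ℕ := Nat.floor (L / δ') + 1 with hNbd
  have hLNb : L < Nb * δ' := by
    have h1 : L / δ' < Nb := by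
      rw [hNbd]
      push_cast
      exact Nat.lt_floor_add_one _
    calc L = (L/δ') * δ' := by field_simp
      _ < Nb * δ' := by exact mul_lt_mul_of_pos_right h1 hδ'0
  set NN : ℕ := 2 * Nb with hNN
  have extract : ∀ γ : Path x x, pathLength γ ≤ ENNReal.ofReal L →
      ∃ s : ℕ → ℝ, s 0 = 0 ∧ (∀ j, NN ≤ j → s j = 1) ∧
        ∀ j, ∀ θ : I, dist (γ.extend (s j + θ * (s (j+1) - s j))) (γ.extend (s j)) < 3 * δ' / 2 :=
    fun γ h => exists_good_partition γ hL hδ'0 h hLNb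
  set sOf : Path x x → ℕ → ℝ := fun γ =>
    if h : pathLength γ ≤ ENNReal.ofReal L then (extract γ h).choose else fun _ => 0 with hsOf
  have hsOf_spec : ∀ γ (h : pathLength γ ≤ ENNReal.ofReal L), sOf γ 0 = 0 ∧
      (∀ j, NN ≤ j → sOf γ j = 1) ∧
      ∀ j, ∀ θ : I, dist (γ.extend (sOf γ j + θ * (sOf γ (j+1) - sOf γ j)))
        (γ.extend (sOf γ j)) < 3*δ'/2 := by
    intro γ h
    rw [hsOf]
    simp only [dif_pos h]
    exact (extract γ h).choose_spec
  set chain : Path x x → ℕ → M := fun γ j => net (γ.extend (sOf γ j)) with hchain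
  have hdet : ∀ (α β : Path x x), pathLength α ≤ ENNReal.ofReal L →
      pathLength β ≤ ENNReal.ofReal L → (∀ j, j < NN → chain α j = chain β j) →
      (⟦α⟧ : Path.Homotopic.Quotient x x) = ⟦β⟧ := by
    intro α β hα hβ hc
    obtain ⟨hs0, hspad, hstr⟩ := hsOf_spec α hα
    obtain ⟨ht0, htpad, httr⟩ := hsOf_spec β hβ
    have hcall : ∀ j, chain α j = chain β j := by
      intro j
      rcases Nat.lt_or_ge j NN with h | h
      · exact hc j h
      · rw [hchain]
        dsimp only
        rw [hspad j h, htpad j h]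
        simp
    have hminη : min (η/2) (ε/2) ≤ η/2 := min_le_left _ _
    have hminε : min (η/2) (ε/2) ≤ ε/2 := min_le_right _ _
    apply chain_determines (ε := ε) (εs := εs) (η := η) (δ := 2*δ')
      (by rw [hεs]; linarith) Hε Hη
      (by rw [hδ']; linarith) (by rw [hεs, hδ']; linarith) (by rw [hδ']; linarith)
      NN α β (chain α) (sOf α) (sOf β) hs0 (hspad NN le_rfl) ht0 (htpad NN le_rfl)
    · intro k _
      rw [hchain]
      dsimp only
      exact lt_of_lt_of_le (hnetd _) (by linarith)
    · intro k _
      rw [hcall k, hchain]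
      dsimp only
      exact lt_of_lt_of_le (hnetd _) (by linarith)
    · intro j _ θ
      rw [hchain]
      dsimp only
      have h1 := hstr j θ
      have h2 := hnetd (α.extend (sOf α j))
      have h3 := dist_triangle (α.extend (sOf α j + θ * (sOf α (j+1) - sOf α j)))
        (α.extend (sOf α j)) (net (α.extend (sOf α j)))
      linarith
    · intro j _ θ
      rw [hcall j, hchain]
      dsimp only
      have h1 := httr j θ
      have h2 := hnetd (β.extend (sOf β j))
      have h3 := dist_triangle (β.extend (sOf β j + θ * (sOf β (j+1) - sOf β j)))
        (β.extend (sOf β j)) (net (β.extend (sOf β j)))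
      linarith
  set rep : FundamentalGroup M x → Path x x := fun g =>
    if h : ∃ γ : Path x x, pathLength γ ≤ ENNReal.ofReal L ∧ g = loopClass γ then h.choose
    else Path.refl x with hrep
  set Φ : FundamentalGroup M x → (Fin NN → M) := fun g j => chain (rep g) j with hΦ
  apply Set.Finite.of_finite_image (f := Φ)
  · apply Set.Finite.subset (Set.Finite.pi (t := fun _ : Fin NN => insert x F)
      (fun _ => hFfin.insert x))
    rintro h ⟨g, hg, rfl⟩
    intro j _
    rw [hΦ, hchain]
    dsimp only
    exact Set.mem_insert_of_mem _ (hnetF _)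
  · intro g₁ hg₁ g₂ hg₂ heq
    have h₁ : ∃ γ : Path x x, pathLength γ ≤ ENNReal.ofReal L ∧ g₁ = loopClass γ := hg₁
    have h₂ : ∃ γ : Path x x, pathLength γ ≤ ENNReal.ofReal L ∧ g₂ = loopClass γ := hg₂
    have hrep₁ : rep g₁ = h₁.choose := by rw [hrep]; simp only [dif_pos h₁]
    have hrep₂ : rep g₂ = h₂.choose := by rw [hrep]; simp only [dif_pos h₂]
    obtain ⟨hlen₁, hgc₁⟩ := h₁.choose_spec
    obtain ⟨hlen₂, hgc₂⟩ := h₂.choose_spec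
    have hcagree : ∀ j, j < NN → chain (rep g₁) j = chain (rep g₂) j := by
      intro j hj
      have hcf := congrFun heq (⟨j, hj⟩ : Fin NN)
      rw [hΦ] at hcf
      exact hcf
    have hQ := hdet (rep g₁) (rep g₂) (by rw [hrep₁]; exact hlen₁)
      (by rw [hrep₂]; exact hlen₂) hcagree
    have hlc : loopClass (rep g₁) = loopClass (rep g₂) := by
      unfold loopClass
      exact congrArg _ hQ
    calc g₁ = loopClass h₁.choose := hgc₁
      _ = loopClass (rep g₁) := by rw [hrep₁]
      _ = loopClass (rep g₂) := hlc
      _ = loopClass h₂.choose := by rw [hrep₂]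
      _ = g₂ := hgc₂.symm
end

section
/- Let M be a compact, connected, locally path-connected metric space that is semi-locally simply connected, and let x ∈ M and L ≥ 0. Then the set of conjugacy classes of π₁(M, x) that contain an element of the form [u · γ · u⁻¹], where γ is a loop in M of length at most L and u is a path from x to γ(0), is finite. -/
open scoped unitInterval ENNReal NNReal
open CategoryTheory

attribute [local instance] Path.Homotopic.setoid

namespace ShortLoopProof
variable {M : Type*} [TopologicalSpace M]

abbrev o (a : M) : FundamentalGroupoid M := FundamentalGroupoid.mk a

noncomputable def hq {a b : M} (w : Path a b) : o a ⟶ o b := ⟦w⟧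

lemma hq_comp {a b c : M} (w : Path a b) (w' : Path b c) :
    hq w ≫ hq w' = hq (w.trans w') := by
  simp [hq, FundamentalGroupoid.comp_eq, Path.Homotopic.Quotient.mk_trans]

lemma hq_symm {a b : M} (w : Path a b) : hq w.symm = Groupoid.inv (hq w) := rfl

lemma hq_refl {a : M} : hq (Path.refl a) = 𝟙 (o a) := rfl

lemma hq_congr {a b : M} {w w' : Path a b} (h : (⟦w⟧ : Path.Homotopic.Quotient a b) = ⟦w'⟧) :
    hq w = hq w' := h

lemma hq_family (w : ∀ a b : M, Path a b) {a a' b b' : M} (ha : a = a') (hb : b = b') :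
    hq (w a b) = eqToHom (congrArg o ha) ≫ hq (w a' b') ≫ eqToHom (congrArg o hb).symm := by
  subst ha; subst hb; simp

lemma hq_cast {a b a' b' : M} (w : Path a b) (ha : a' = a) (hb : b' = b) :
    hq (w.cast ha hb) = eqToHom (congrArg o ha) ≫ hq w ≫ eqToHom (congrArg o hb).symm := by
  subst ha; subst hb
  have : w.cast rfl rfl = w := by ext t; rw [Path.cast_coe]
  simp [this]

noncomputable def fa {x : M} (p : o x ⟶ o x) : FundamentalGroup M x :=
  p

lemma conj_indep {x : M} {Y : FundamentalGroupoid M} (f f' : o x ⟶ Y) (h : Y ⟶ Y) :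
    ConjClasses.mk (fa (f ≫ h ≫ Groupoid.inv f))
      = ConjClasses.mk (fa (f' ≫ h ≫ Groupoid.inv f')) := by
  rw [ConjClasses.mk_eq_mk_iff_isConj, isConj_iff]
  refine ⟨fa (f ≫ Groupoid.inv f'), ?_⟩
  show Groupoid.inv (f ≫ Groupoid.inv f') ≫ ((f ≫ h ≫ Groupoid.inv f) ≫ (f ≫ Groupoid.inv f')) = _
  simp [fa, Groupoid.inv_eq_inv, Category.assoc]


lemma truncateOfLE_apply {X : Type*} [TopologicalSpace X] {a b : X} (γ : Path a b) {r s : ℝ}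
    (h : r ≤ s) (z : I) : γ.truncateOfLE h z = γ.extend (min (max (z : ℝ) r) s) := by
  simp only [Path.truncateOfLE, Path.cast_coe]
  rfl

lemma trunc_trans {X : Type*} [TopologicalSpace X] {a b : X} (γ : Path a b) {r s t : ℝ}
    (hrs : r ≤ s) (hst : s ≤ t) (h0 : 0 ≤ s) (h1 : s ≤ 1) :
    ((γ.truncateOfLE hrs).trans (γ.truncateOfLE hst)).Homotopic
      (γ.truncateOfLE (hrs.trans hst)) := by
  have hmem : ∀ u : I, max (min (2 * (u : ℝ)) s) (2 * (u : ℝ) - 1) ∈ I := by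
    intro u
    constructor
    · exact le_max_of_le_left (le_min (mul_nonneg two_pos.le u.2.1) h0)
    · exact max_le (min_le_of_right_le h1) (by linarith [u.2.2])
  set φ : I → I := fun u => ⟨max (min (2 * (u : ℝ)) s) (2 * (u : ℝ) - 1), hmem u⟩ with hφ
  have hcont : Continuous φ := by
    apply Continuous.subtype_mk
    fun_prop
  have hφ0 : φ 0 = 0 := by
    apply Subtype.ext
    show max (min (2 * ((0:I):ℝ)) s) (2 * ((0:I):ℝ) - 1) = ((0:I):ℝ)
    norm_num
    rw [min_eq_left h0]
    exact max_eq_left (by norm_num)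
  have hφ1 : φ 1 = 1 := by
    apply Subtype.ext
    show max (min (2 * ((1:I):ℝ)) s) (2 * ((1:I):ℝ) - 1) = ((1:I):ℝ)
    norm_num
    exact h1
  have key : (γ.truncateOfLE hrs).trans (γ.truncateOfLE hst)
      = (γ.truncateOfLE (hrs.trans hst)).reparam φ hcont hφ0 hφ1 := by
    ext u
    rw [Path.trans_apply]
    simp only [Path.coe_reparam, Function.comp_apply, truncateOfLE_apply]
    split_ifs with h
    · have e1 : max (min (2 * (u : ℝ)) s) (2 * (u : ℝ) - 1) = min (2 * (u : ℝ)) s :=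
        max_eq_left (le_min (by linarith) (by linarith))
      congr 1
      rw [hφ]; dsimp only
      rw [e1, max_min_distrib_right, max_eq_left hrs, min_assoc, min_eq_left hst, max_comm]
    · have e1 : max (min (2 * (u : ℝ)) s) (2 * (u : ℝ) - 1) = max (2 * (u : ℝ) - 1) s := by
        rw [min_eq_right (by linarith [u.2.2]), max_comm]
      congr 1
      rw [hφ]; dsimp only
      rw [e1, max_eq_left (le_trans hrs (le_max_right _ _))]
  rw [key]
  exact ⟨(Path.Homotopy.reparam _ φ hcont hφ0 hφ1).symm⟩


lemma exists_partition {M : Type*} [MetricSpace M] {p : M} (γ : Path p p) {L ε : ℝ}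
    (hε : 0 < ε) (hL : 0 ≤ L) (hlen : eVariationOn γ Set.univ ≤ ENNReal.ofReal L) :
    ∃ T : ℕ → ℝ, T 0 = 0 ∧ Monotone T ∧ (∀ k, T k ∈ Set.Icc (0:ℝ) 1) ∧
      T (⌊L / ε⌋₊ + 1) = 1 ∧
      ∀ k r, T k ≤ r → r ≤ T (k + 1) → dist (γ.extend (T k)) (γ.extend r) ≤ ε := by
  classical
  set S : ℝ → Set ℝ := fun t =>
    {s | s ∈ Set.Icc t 1 ∧ ∀ r ∈ Set.Icc t s, dist (γ.extend t) (γ.extend r) ≤ ε} with hS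
  set nxt : ℝ → ℝ := fun t => sSup (S t) with hnxt
  have hmemS : ∀ t, t ∈ Set.Icc (0:ℝ) 1 → t ∈ S t := by
    intro t ht
    refine ⟨⟨le_rfl, ht.2⟩, fun r hr => ?_⟩
    have : r = t := le_antisymm hr.2 hr.1
    simpa [this] using hε.le
  have hbdd : ∀ t, BddAbove (S t) := fun t => ⟨1, fun s hs => hs.1.2⟩
  have hne : ∀ t, t ∈ Set.Icc (0:ℝ) 1 → (S t).Nonempty := fun t ht => ⟨t, hmemS t ht⟩
  have h_le : ∀ t, t ∈ Set.Icc (0:ℝ) 1 → t ≤ nxt t :=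
    fun t ht => le_csSup (hbdd t) (hmemS t ht)
  have h_le1 : ∀ t, t ∈ Set.Icc (0:ℝ) 1 → nxt t ≤ 1 :=
    fun t ht => csSup_le (hne t ht) (fun s hs => hs.1.2)
  have hc : ∀ t : ℝ, Continuous fun z : ℝ => dist (γ.extend t) (γ.extend z) :=
    fun t => Continuous.dist continuous_const γ.continuous_extend
  have hP : ∀ t, t ∈ Set.Icc (0:ℝ) 1 → ∀ r, t ≤ r → r ≤ nxt t →
      dist (γ.extend t) (γ.extend r) ≤ ε := by
    intro t ht r htr hrn
    by_contra hgt
    push_neg at hgt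
    rcases eq_or_lt_of_le htr with h | htlt
    · rw [← h, dist_self] at hgt; linarith
    obtain ⟨δ, hδ0, hδ⟩ : ∃ δ > 0, ∀ z ∈ Metric.ball r δ,
        ε < dist (γ.extend t) (γ.extend z) := by
      have hO : IsOpen {z : ℝ | ε < dist (γ.extend t) (γ.extend z)} :=
        isOpen_lt continuous_const (hc t)
      obtain ⟨δ, hδ0, hsub⟩ := Metric.isOpen_iff.mp hO r hgt
      exact ⟨δ, hδ0, fun z hz => hsub hz⟩
    by_cases hcase : ∃ s ∈ S t, r ≤ s
    · obtain ⟨s, hs, hrs⟩ := hcase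
      exact absurd (hs.2 r ⟨htr, hrs⟩) (not_le.mpr hgt)
    push_neg at hcase
    have hnr : nxt t ≤ r := csSup_le (hne t ht) fun s hs => (hcase s hs).le
    have hreq : r = nxt t := le_antisymm hrn hnr
    set r' := max t (r - δ/2) with hr'
    have hr'lt : r' < r := max_lt htlt (by linarith)
    have hr'ge : r - δ/2 ≤ r' := le_max_right _ _
    have hr'ball : r' ∈ Metric.ball r δ := by
      rw [Metric.mem_ball, Real.dist_eq, abs_lt]
      constructor <;> linarith
    have hr'n : r' < nxt t := hreq ▸ hr'lt
    obtain ⟨s, hsS, hr's⟩ := exists_lt_of_lt_csSup (hne t ht) hr'n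
    exact absurd (hsS.2 r' ⟨le_max_left _ _, hr's.le⟩) (not_le.mpr (hδ r' hr'ball))
  have hQ : ∀ t, t ∈ Set.Icc (0:ℝ) 1 → nxt t < 1 →
      ε ≤ dist (γ.extend t) (γ.extend (nxt t)) := by
    intro t ht hlt1
    by_contra hlt
    push_neg at hlt
    obtain ⟨δ, hδ0, hδ⟩ : ∃ δ > 0, ∀ z ∈ Metric.ball (nxt t) δ,
        dist (γ.extend t) (γ.extend z) < ε := by
      have hO : IsOpen {z : ℝ | dist (γ.extend t) (γ.extend z) < ε} :=
        isOpen_lt (hc t) continuous_const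
      obtain ⟨δ, hδ0, hsub⟩ := Metric.isOpen_iff.mp hO (nxt t) hlt
      exact ⟨δ, hδ0, fun z hz => hsub hz⟩
    set s := min (nxt t + δ/2) 1 with hs
    have hsgt : nxt t < s := lt_min (by linarith) hlt1
    have hsS : s ∈ S t := by
      refine ⟨⟨(h_le t ht).trans hsgt.le, min_le_right _ _⟩, fun r hr => ?_⟩
      rcases le_or_gt r (nxt t) with h | h
      · exact hP t ht r hr.1 h
      · refine (hδ r ?_).le
        rw [Metric.mem_ball, Real.dist_eq, abs_lt]
        have : r ≤ nxt t + δ/2 := hr.2.trans (min_le_left _ _)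
        constructor <;> linarith
    exact absurd (le_csSup (hbdd t) hsS) (not_le.mpr hsgt)
  set T : ℕ → ℝ := fun n => nxt^[n] 0 with hT
  have TS : ∀ n, T (n + 1) = nxt (T n) := fun n => Function.iterate_succ_apply' nxt n 0
  have hT0 : T 0 = 0 := rfl
  have hTmem : ∀ n, T n ∈ Set.Icc (0:ℝ) 1 := by
    intro n
    induction n with
    | zero => exact ⟨le_rfl, zero_le_one⟩
    | succ n ih =>
      rw [TS]
      exact ⟨ih.1.trans (h_le _ ih), h_le1 _ ih⟩
  have hmono : Monotone T := monotone_nat_of_le_succ fun n => by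
    rw [TS]; exact h_le _ (hTmem n)
  have hPfin : ∀ k r, T k ≤ r → r ≤ T (k + 1) → dist (γ.extend (T k)) (γ.extend r) ≤ ε := by
    intro k r h1 h2
    rw [TS] at h2
    exact hP (T k) (hTmem k) r h1 h2
  set N := ⌊L / ε⌋₊ + 1 with hN
  refine ⟨T, hT0, hmono, hTmem, ?_, hPfin⟩
  by_contra hne1
  have hTN : T N < 1 := lt_of_le_of_ne (hTmem N).2 hne1
  have hstep : ∀ k, k < N → ε ≤ dist (γ.extend (T k)) (γ.extend (T (k + 1))) := by
    intro k hk
    have : T (k + 1) < 1 := lt_of_le_of_lt (hmono hk) hTN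
    rw [TS] at this ⊢
    exact hQ (T k) (hTmem k) this
  set u : ℕ → I := fun k => ⟨T (min k N), hTmem _⟩ with hu
  have humono : Monotone u := by
    intro a b hab
    exact Subtype.mk_le_mk.mpr (hmono (min_le_min hab le_rfl))
  have key : ∑ i ∈ Finset.range N, edist (γ (u (i + 1))) (γ (u i)) ≤ eVariationOn γ Set.univ :=
    eVariationOn.sum_le (f := γ) (n := N) humono (fun i => Set.mem_univ _)
  have hterm : ∀ i ∈ Finset.range N, ENNReal.ofReal ε ≤ edist (γ (u (i + 1))) (γ (u i)) := by
    intro i hi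
    rw [Finset.mem_range] at hi
    have h1 : u i = ⟨T i, hTmem i⟩ := by
      simp only [hu, Subtype.mk.injEq]
      rw [min_eq_left hi.le]
    have h2 : u (i + 1) = ⟨T (i + 1), hTmem (i + 1)⟩ := by
      simp only [hu, Subtype.mk.injEq]
      rw [min_eq_left (by omega)]
    rw [h1, h2, edist_dist]
    apply ENNReal.ofReal_le_ofReal
    have hst := hstep i hi
    rw [γ.extend_apply (hTmem i), γ.extend_apply (hTmem (i+1)), dist_comm] at hst
    exact hst
  have hsum : (N : ℝ≥0∞) * ENNReal.ofReal ε
      ≤ ∑ i ∈ Finset.range N, edist (γ (u (i + 1))) (γ (u i)) := by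
    have h := Finset.card_nsmul_le_sum (Finset.range N) _ _ hterm
    rwa [Finset.card_range, nsmul_eq_mul] at h
  have hfin : ENNReal.ofReal (N * ε) ≤ ENNReal.ofReal L := by
    have he : ENNReal.ofReal ((N:ℝ) * ε) = (N : ℝ≥0∞) * ENNReal.ofReal ε := by
      rw [ENNReal.ofReal_mul (by positivity), ENNReal.ofReal_natCast]
    rw [he]
    exact le_trans hsum (le_trans key hlen)
  have hNL : L < N * ε := by
    have h1 : L / ε < (N : ℝ) := by
      have h2 := Nat.lt_floor_add_one (L / ε)
      push_cast [hN]
      linarith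
    have h3 := mul_lt_mul_of_pos_right h1 hε
    rwa [div_mul_cancel₀ _ (ne_of_gt hε)] at h3
  exact absurd ((ENNReal.ofReal_le_ofReal_iff hL).mp hfin) (not_le.mpr hNL)


/-- chain of `vpath`s along a sequence of points -/
noncomputable def chainD (w : ∀ a b : M, Path a b) (g : ℕ → M) : ∀ n, (o (g 0) ⟶ o (g n))
  | 0 => 𝟙 _
  | (n+1) => chainD w g n ≫ hq (w (g n) (g (n+1)))

lemma chainD_congr (w : ∀ a b : M, Path a b) (g g' : ℕ → M) (n : ℕ)
    (h : ∀ k, k ≤ n → g k = g' k) :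
    chainD w g n = eqToHom (congrArg o (h 0 (Nat.zero_le n)))
      ≫ chainD w g' n ≫ eqToHom (congrArg o (h n le_rfl)).symm := by
  induction n with
  | zero => simp [chainD]
  | succ n ih =>
    have hn : ∀ k, k ≤ n → g k = g' k := fun k hk => h k (hk.trans (Nat.le_succ n))
    have hv := hq_family w (hn n le_rfl) (h (n+1) le_rfl)
    rw [chainD, chainD, ih hn, hv]
    simp

/-- chain of truncations of a path -/
noncomputable def truncChain {a b : M} (γ : Path a b) (T : ℕ → ℝ) (hT : Monotone T) :
    ∀ n, (o (γ.extend (T 0)) ⟶ o (γ.extend (T n)))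
  | 0 => 𝟙 _
  | (n+1) => truncChain γ T hT n ≫ hq (γ.truncateOfLE (hT (Nat.le_succ n)))

lemma truncateOfLE_refl {a b : M} (γ : Path a b) {t : ℝ} (h : t ≤ t) :
    γ.truncateOfLE h = Path.refl (γ.extend t) := by
  ext u
  show γ.extend (min (max (u:ℝ) t) t) = γ.extend t
  rw [min_eq_right (le_max_right _ _)]


lemma hq_homotopic {a b : M} {w w' : Path a b} (h : w.Homotopic w') : hq w = hq w' :=
  Quotient.sound h

lemma truncChain_eq {a b : M} (γ : Path a b) (T : ℕ → ℝ) (hT : Monotone T)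
    (hmem : ∀ k, T k ∈ Set.Icc (0:ℝ) 1) (n : ℕ) :
    truncChain γ T hT n = hq (γ.truncateOfLE (hT (Nat.zero_le n))) := by
  induction n with
  | zero =>
    rw [truncChain, truncateOfLE_refl γ (hT (Nat.zero_le 0))]
    rfl
  | succ n ih =>
    rw [truncChain, ih, hq_comp]
    exact hq_homotopic (trunc_trans γ _ _ (hmem n).1 (hmem n).2)

end ShortLoopProof

open ShortLoopProof in
/-- In a compact, connected, locally path-connected, semi-locally simply connected metric
space, only finitely many conjugacy classes of the fundamental group contain an element of the
form `[u · γ · u⁻¹]` with `γ` a loop of length at most `L` and `u` a path from the basepoint to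
`γ(0)`. -/
theorem finite_short_loop_conjClasses {M : Type*} [MetricSpace M] [CompactSpace M]
    [ConnectedSpace M] [LocallyPathConnectedSpace M]
    (hslsc : ∀ p : M, ∃ U : Set M, IsOpen U ∧ p ∈ U ∧ ∀ (q : M) (γ : Path q q),
      (∀ t : I, γ t ∈ U) → (⟦γ⟧ : Path.Homotopic.Quotient q q) = ⟦Path.refl q⟧)
    (x : M) (L : ℝ) (hL : 0 ≤ L) :
    {c : ConjClasses (FundamentalGroup M x) |
      ∃ (p : M) (γ : Path p p) (u : Path x p), pathLength γ ≤ ENNReal.ofReal L ∧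
        c = ConjClasses.mk (loopClass ((u.trans γ).trans u.symm))}.Finite := by

  classical
  haveI : PathConnectedSpace M := pathConnectedSpace_iff_connectedSpace.mpr inferInstance
  choose U hUopen hUmem hUnull using hslsc
  obtain ⟨δ₁, hδ₁, hub⟩ := lebesgue_number_lemma_of_metric (isCompact_univ (X := M)) hUopen
    (fun a _ => Set.mem_iUnion.mpr ⟨a, hUmem a⟩)
  have hVex : ∀ a : M, ∃ V : Set M,
      V ∈ nhds a ∧ IsPathConnected V ∧ V ⊆ Metric.ball a (δ₁/8) := by
    intro a
    obtain ⟨V, ⟨hV1, hV2⟩, hV3⟩ := (path_connected_basis a).mem_iff.mp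
      (Metric.ball_mem_nhds a (ε := δ₁/8) (by linarith))
    exact ⟨V, hV1, hV2, hV3⟩
  choose V hVnhds hVpc hVball using hVex
  obtain ⟨ρ, hρ, hVcov⟩ := lebesgue_number_lemma_of_metric (isCompact_univ (X := M))
    (fun a => isOpen_interior (s := V a)) (fun b _ => Set.mem_iUnion.mpr
      ⟨b, mem_interior_iff_mem_nhds.mpr (hVnhds b)⟩)
  have hconn : ∀ b c : M, dist b c < ρ → ∃ w : Path b c, ∀ t, dist (w t) b < δ₁/4 := by
    intro b c hbc
    obtain ⟨a, ha⟩ := hVcov b (Set.mem_univ b)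
    have hbV : b ∈ V a := interior_subset (ha (Metric.mem_ball_self hρ))
    have hcV : c ∈ V a := interior_subset (ha (by rw [Metric.mem_ball, dist_comm]; exact hbc))
    obtain ⟨w, hw⟩ := (hVpc a).joinedIn b hbV c hcV
    refine ⟨w, fun t => ?_⟩
    have h1 : dist (w t) a < δ₁/8 := Metric.mem_ball.mp (hVball a (hw t))
    have h2 : dist b a < δ₁/8 := Metric.mem_ball.mp (hVball a hbV)
    have h3 := dist_triangle (w t) a b
    rw [dist_comm a b] at h3
    linarith
  have hvex : ∀ b c : M, ∃ w : Path b c,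
      (dist b c < ρ → ∀ t, dist (w t) b < δ₁/4) ∧ ∀ h : b = c, HEq w (Path.refl b) := by
    intro b c
    by_cases hbc : b = c
    · subst hbc
      refine ⟨Path.refl b, fun _ t => ?_, fun _ => HEq.rfl⟩
      simp only [Path.refl_apply, dist_self]
      positivity
    · by_cases hd : dist b c < ρ
      · obtain ⟨w, hw⟩ := hconn b c hd
        exact ⟨w, fun _ => hw, fun h => absurd h hbc⟩
      · exact ⟨PathConnectedSpace.somePath b c, fun h => absurd h hd, fun h => absurd h hbc⟩
  choose vpath hvball hvrefl using hvex
  set ε := min ρ δ₁ / 8 with hεdef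
  have hε : 0 < ε := by
    have := lt_min hρ hδ₁
    positivity
  have hερ : 3 * ε < ρ := by
    have h := min_le_left ρ δ₁
    rw [hεdef]; linarith
  have hεδ : 3 * ε < δ₁ / 2 := by
    have h := min_le_right ρ δ₁
    rw [hεdef]; linarith
  obtain ⟨net, hnsub, hnfin, hncov⟩ :=
    finite_cover_balls_of_compact (isCompact_univ (X := M)) hε
  have hnear : ∀ b : M, ∃ qn, qn ∈ net ∧ dist b qn < ε := by
    intro b
    have hb := hncov (Set.mem_univ b)
    simp only [Set.mem_iUnion] at hb
    obtain ⟨qn, hqn, hbq⟩ := hb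
    exact ⟨qn, hqn, Metric.mem_ball.mp hbq⟩
  choose nearest hnmem hndist using hnear
  set N := ⌊L / ε⌋₊ + 1 with hNdef
  set spx : M → Path x x → _ := fun a => id with hspxdummy
  clear hspxdummy spx
  set Φ : (Fin (N+1) → M) → ConjClasses (FundamentalGroup M x) := fun g =>
    ConjClasses.mk (fa (hq (PathConnectedSpace.somePath x ((fun k => g ⟨min k N, by omega⟩) 0))
      ≫ (chainD vpath (fun k => g ⟨min k N, by omega⟩) N
          ≫ hq (vpath ((fun k => g ⟨min k N, by omega⟩) N) ((fun k => g ⟨min k N, by omega⟩) 0)))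
      ≫ Groupoid.inv (hq (PathConnectedSpace.somePath x
          ((fun k => g ⟨min k N, by omega⟩) 0))))) with hΦdef
  haveI : Finite ↥net := hnfin.to_subtype
  set Ψ : (Fin (N+1) → ↥net) → ConjClasses (FundamentalGroup M x) :=
    fun g => Φ (fun i => (g i : M)) with hΨdef
  apply Set.Finite.subset (Set.finite_range Ψ)
  rintro c ⟨p, γ, u, hlen, rfl⟩
  obtain ⟨T, hT0, hTmono, hTmem, hTN, hTP⟩ := exists_partition γ hε hL hlen
  set q : ℕ → M := fun k => nearest (γ.extend (T k)) with hqdef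
  have hdq : ∀ k, dist (q k) (γ.extend (T k)) < ε := fun k => by
    rw [dist_comm]; exact hndist _
  have hdqq : ∀ k, dist (q k) (q (k+1)) < 3*ε := by
    intro k
    have h1 := hdq k
    have h2 := hdq (k+1)
    have h3 : dist (γ.extend (T k)) (γ.extend (T (k+1))) ≤ ε :=
      hTP k (T (k+1)) (hTmono (Nat.le_succ k)) le_rfl
    have h4 := dist_triangle4 (q k) (γ.extend (T k)) (γ.extend (T (k+1))) (q (k+1))
    rw [dist_comm (γ.extend (T (k+1))) (q (k+1))] at h4
    linarith
  -- the per-segment homotopy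
  have hseg : ∀ k, hq (vpath (q k) (γ.extend (T k)))
        ≫ hq (γ.truncateOfLE (hTmono (Nat.le_succ k)))
      = hq (vpath (q k) (q (k+1))) ≫ hq (vpath (q (k+1)) (γ.extend (T (k+1)))) := by
    intro k
    obtain ⟨a0, ha0⟩ := hub (q k) (Set.mem_univ _)
    set A := (vpath (q k) (γ.extend (T k))).trans (γ.truncateOfLE (hTmono (Nat.le_succ k)))
      with hA
    set B := (vpath (q k) (q (k+1))).trans (vpath (q (k+1)) (γ.extend (T (k+1)))) with hB
    have hAB : ∀ t : I, (A.trans B.symm) t ∈ U a0 := by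
      intro t
      apply ha0
      have hmem' := Set.mem_range_self (f := (A.trans B.symm)) t
      rw [Path.trans_range, Path.symm_range, hA, hB, Path.trans_range, Path.trans_range]
        at hmem'
      refine Metric.mem_ball.mpr ?_
      rcases hmem' with (h | h) | (h | h)
      · obtain ⟨z, hz⟩ := h
        rw [← hz]
        have := hvball (q k) (γ.extend (T k)) (lt_trans (hdq k) (by linarith)) z
        linarith
      · obtain ⟨z, hz⟩ := h
        rw [← hz, truncateOfLE_apply]
        simp only [Nat.succ_eq_add_one]
        have hr1 : T k ≤ min (max (z:ℝ) (T k)) (T (k+1)) :=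
          le_min (le_max_right _ _) (hTmono (Nat.le_succ k))
        have hr2 : min (max (z:ℝ) (T k)) (T (k+1)) ≤ T (k+1) := min_le_right _ _
        have h5 := hTP k _ hr1 hr2
        have h6 : dist (γ.extend (T k)) (q k) < ε := by rw [dist_comm]; exact hdq k
        have h7 := dist_triangle (γ.extend (min (max (z:ℝ) (T k)) (T (k+1))))
          (γ.extend (T k)) (q k)
        rw [dist_comm (γ.extend (T k)) (γ.extend (min (max (z:ℝ) (T k)) (T (k+1))))] at h5
        linarith
      · obtain ⟨z, hz⟩ := h
        rw [← hz]
        have := hvball (q k) (q (k+1)) (lt_trans (hdqq k) hερ) z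
        linarith
      · obtain ⟨z, hz⟩ := h
        rw [← hz]
        have h8 := hvball (q (k+1)) (γ.extend (T (k+1)))
          (lt_trans (hdq (k+1)) (by linarith)) z
        have h9 := hdqq k
        have h10 := dist_triangle (vpath (q (k+1)) (γ.extend (T (k+1))) z) (q (k+1)) (q k)
        rw [dist_comm (q (k+1)) (q k)] at h10
        linarith
    have hqnull : hq (A.trans B.symm) = 𝟙 (o (q k)) := hUnull a0 (q k) (A.trans B.symm) hAB
    rw [← hq_comp, hq_symm, hA, hB, ← hq_comp, ← hq_comp] at hqnull
    have h11 := congrArg (fun z => z ≫ (hq (vpath (q k) (q (k+1)))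
      ≫ hq (vpath (q (k+1)) (γ.extend (T (k+1)))))) hqnull
    simp only [Category.assoc, Category.id_comp, Groupoid.inv_eq_inv, IsIso.inv_comp,
      IsIso.inv_hom_id, Category.comp_id, IsIso.inv_hom_id_assoc] at h11
    rw [h11]
  have hkey : ∀ n, truncChain γ T hTmono n
      = Groupoid.inv (hq (vpath (q 0) (γ.extend (T 0)))) ≫ chainD vpath q n
        ≫ hq (vpath (q n) (γ.extend (T n))) := by
    intro n
    induction n with
    | zero =>
      rw [truncChain, chainD]
      simp [Groupoid.inv_eq_inv]
    | succ n ih =>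
      rw [truncChain, chainD, ih]
      simp only [Category.assoc]
      rw [hseg n]
  have hpa : p = γ.extend (T 0) := by rw [hT0, Path.extend_zero]
  have hpb : p = γ.extend (T N) := by rw [hTN, Path.extend_one]
  have htr : γ = (γ.truncateOfLE (hTmono (Nat.zero_le N))).cast hpa hpb := by
    ext t
    rw [Path.cast_coe, truncateOfLE_apply, hT0, hTN, max_eq_left t.2.1, min_eq_left t.2.2,
      γ.extend_extends']
  have hG : hq γ = eqToHom (congrArg o hpa) ≫ truncChain γ T hTmono N
      ≫ eqToHom (congrArg o hpb).symm := by
    conv_lhs => rw [htr]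
    rw [hq_cast, truncChain_eq γ T hTmono hTmem]
  have hpq : γ.extend (T N) = γ.extend (T 0) := by rw [← hpa, ← hpb]
  have hqN0 : q N = q 0 := by simp only [hqdef]; rw [hpq]
  have hSN : hq (vpath (q N) (γ.extend (T N)))
      = eqToHom (congrArg o hqN0) ≫ hq (vpath (q 0) (γ.extend (T 0)))
        ≫ eqToHom (congrArg o hpq).symm := hq_family vpath hqN0 hpq
  have hvrefl0 : vpath (q 0) (q 0) = Path.refl (q 0) := eq_of_heq (hvrefl _ _ rfl)
  have hvN : hq (vpath (q N) (q 0)) = eqToHom (congrArg o hqN0) := by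
    rw [hq_family vpath hqN0 rfl, hvrefl0]
    simp [hq_refl]
  -- main identity
  have hmain : hq ((u.trans γ).trans u.symm)
      = (hq u ≫ eqToHom (congrArg o hpa) ≫ Groupoid.inv (hq (vpath (q 0) (γ.extend (T 0)))))
        ≫ (chainD vpath q N ≫ hq (vpath (q N) (q 0)))
        ≫ Groupoid.inv (hq u ≫ eqToHom (congrArg o hpa)
            ≫ Groupoid.inv (hq (vpath (q 0) (γ.extend (T 0))))) := by
    rw [← hq_comp, ← hq_comp, hq_symm, hG, hkey N, hSN, hvN]
    simp [Groupoid.inv_eq_inv, eqToHom_trans, eqToHom_refl]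
  refine ⟨fun i => ⟨q i, hnmem _⟩, ?_⟩
  show Φ (fun i => q i) = _
  have hgg : ∀ k, k ≤ N → (fun k => q (min k N)) k = q k := by
    intro k hk
    simp only
    rw [Nat.min_eq_left hk]
  have hΦval : Φ (fun i => q i)
      = ConjClasses.mk (fa ((hq (PathConnectedSpace.somePath x (q 0)))
          ≫ (chainD vpath q N ≫ hq (vpath (q N) (q 0)))
          ≫ Groupoid.inv (hq (PathConnectedSpace.somePath x (q 0))))) := by
    rw [hΦdef]
    simp only
    congr 1
    rw [chainD_congr vpath (fun k => q (min k N)) q N hgg,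
      hq_family vpath (hgg N le_rfl) (hgg 0 (Nat.zero_le N)),
      hq_family (fun a b => PathConnectedSpace.somePath a b) (rfl : x = x)
        (hgg 0 (Nat.zero_le N))]
    simp [Groupoid.inv_eq_inv, eqToHom_trans, eqToHom_refl]
  rw [hΦval]
  have hloop : loopClass ((u.trans γ).trans u.symm) = fa (hq ((u.trans γ).trans u.symm)) := rfl
  rw [hloop, hmain]
  exact conj_indep (hq (PathConnectedSpace.somePath x (q 0)))
    (hq u ≫ eqToHom (congrArg o hpa) ≫ Groupoid.inv (hq (vpath (q 0) (γ.extend (T 0)))))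
    (chainD vpath q N ≫ hq (vpath (q N) (q 0)))
end

section
/- Let M be a compact, connected, locally path-connected metric space that is semi-locally simply connected, let x ∈ M, and suppose that π₁(M, x) is residually finite. Then for every L ≥ 0 there exists a normal subgroup N of π₁(M, x) of finite index with the following property: for every loop γ in M of length at most L and every path u from x to γ(0), if the class [u · γ · u⁻¹] lies in N, then [u · γ · u⁻¹] = 1. -/
open scoped unitInterval
open CategoryTheory

attribute [local instance] Path.Homotopic.setoid

namespace ShortLoopsAux

noncomputable def pt (c : ℝ) : I := Set.projIcc 0 1 zero_le_one c

lemma pt_coe {c : ℝ} (h0 : 0 ≤ c) (h1 : c ≤ 1) : ((pt c : I) : ℝ) = c := by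
  simp [pt, Set.coe_projIcc, max_eq_right, min_eq_right, h1, h0]

lemma pt_mono : Monotone pt := fun _ _ h => Set.monotone_projIcc zero_le_one h

section Top

variable {M : Type*} [TopologicalSpace M]

noncomputable def subPath {a b : M} (γ : Path a b) (s t : I) : Path (γ s) (γ t) where
  toFun r := γ ⟨(s : ℝ) + (r : ℝ) * ((t : ℝ) - (s : ℝ)), by
    constructor <;> nlinarith [r.2.1, r.2.2, s.2.1, s.2.2, t.2.1, t.2.2]⟩
  continuous_toFun := by
    apply γ.continuous.comp; apply Continuous.subtype_mk; continuity
  source' := by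
    refine congrArg γ (Subtype.ext ?_)
    show (s : ℝ) + ((0 : I) : ℝ) * ((t : ℝ) - (s : ℝ)) = (s : ℝ); norm_num
  target' := by
    refine congrArg γ (Subtype.ext ?_)
    show (s : ℝ) + ((1 : I) : ℝ) * ((t : ℝ) - (s : ℝ)) = (t : ℝ); norm_num

lemma subPath_mem {a b : M} (γ : Path a b) {s t : I} (hst : s ≤ t) (r : I) :
    ∃ w : I, s ≤ w ∧ w ≤ t ∧ subPath γ s t r = γ w := by
  have hst' : (s : ℝ) ≤ (t : ℝ) := hst
  refine ⟨⟨(s : ℝ) + (r : ℝ) * ((t : ℝ) - (s : ℝ)), ?_⟩, ?_, ?_, rfl⟩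
  · constructor <;> nlinarith [r.2.1, r.2.2, s.2.1, s.2.2, t.2.1, t.2.2]
  · show (s : ℝ) ≤ (s : ℝ) + (r : ℝ) * ((t : ℝ) - (s : ℝ))
    nlinarith [r.2.1, r.2.2]
  · show (s : ℝ) + (r : ℝ) * ((t : ℝ) - (s : ℝ)) ≤ (t : ℝ)
    nlinarith [r.2.1, r.2.2]

lemma homotopic_of_comp {a b c d : M} (γ : Path a b) (φ ψ : I → I)
    (hφ : Continuous φ) (hψ : Continuous ψ) (h0 : φ 0 = ψ 0) (h1 : φ 1 = ψ 1)
    (A B : Path c d) (hA : ∀ r, A r = γ (φ r)) (hB : ∀ r, B r = γ (ψ r)) :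
    A.Homotopic B := by
  have mem : ∀ z : I × I, ((1 - (z.1 : ℝ)) * (φ z.2 : ℝ) + (z.1 : ℝ) * (ψ z.2 : ℝ)) ∈ I := by
    intro z
    constructor <;>
      nlinarith [z.1.2.1, z.1.2.2, (φ z.2).2.1, (φ z.2).2.2, (ψ z.2).2.1, (ψ z.2).2.2]
  refine ⟨{ toFun := fun z => γ ⟨(1 - (z.1 : ℝ)) * (φ z.2 : ℝ) + (z.1 : ℝ) * (ψ z.2 : ℝ), mem z⟩
            continuous_toFun := ?_
            map_zero_left := ?_
            map_one_left := ?_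
            prop' := ?_ }⟩
  · apply γ.continuous.comp
    apply Continuous.subtype_mk
    fun_prop
  · intro r
    show γ _ = A r
    rw [hA]
    refine congrArg γ (Subtype.ext ?_)
    show (1 - ((0 : I) : ℝ)) * (φ r : ℝ) + ((0 : I) : ℝ) * (ψ r : ℝ) = (φ r : ℝ)
    norm_num
  · intro r
    show γ _ = B r
    rw [hB]
    refine congrArg γ (Subtype.ext ?_)
    show (1 - ((1 : I) : ℝ)) * (φ r : ℝ) + ((1 : I) : ℝ) * (ψ r : ℝ) = (ψ r : ℝ)
    norm_num
  · rintro z r (rfl | h)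
    · show γ _ = A 0
      rw [hA]
      refine congrArg γ (Subtype.ext ?_)
      show (1 - (z : ℝ)) * (φ 0 : ℝ) + (z : ℝ) * (ψ 0 : ℝ) = (φ 0 : ℝ)
      rw [h0]; ring
    · simp only [Set.mem_singleton_iff] at h
      subst h
      show γ _ = A 1
      rw [hA]
      refine congrArg γ (Subtype.ext ?_)
      show (1 - (z : ℝ)) * (φ 1 : ℝ) + (z : ℝ) * (ψ 1 : ℝ) = (φ 1 : ℝ)
      rw [h1]; ring

lemma subPath_trans_homotopic {a b : M} (γ : Path a b) (s t w : I) :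
    ((subPath γ s t).trans (subPath γ t w)).Homotopic (subPath γ s w) := by
  have memφ : ∀ r : I, (if (r : ℝ) ≤ 1/2 then (s : ℝ) + (2 * (r : ℝ)) * ((t : ℝ) - (s : ℝ))
      else (t : ℝ) + (2 * (r : ℝ) - 1) * ((w : ℝ) - (t : ℝ))) ∈ I := by
    intro r
    split_ifs with h <;> constructor <;>
      nlinarith [r.2.1, r.2.2, s.2.1, s.2.2, t.2.1, t.2.2, w.2.1, w.2.2]
  set φ : I → I := fun r => ⟨_, memφ r⟩ with hφdef
  have memψ : ∀ r : I, ((s : ℝ) + (r : ℝ) * ((w : ℝ) - (s : ℝ))) ∈ I := by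
    intro r
    constructor <;> nlinarith [r.2.1, r.2.2, s.2.1, s.2.2, w.2.1, w.2.2]
  set ψ : I → I := fun r => ⟨_, memψ r⟩ with hψdef
  apply homotopic_of_comp γ φ ψ
  · apply Continuous.subtype_mk
    apply Continuous.if_le
    · fun_prop
    · fun_prop
    · fun_prop
    · fun_prop
    · intro r hr
      rw [hr]; norm_num
  · apply Continuous.subtype_mk; fun_prop
  · refine Subtype.ext ?_
    show (if ((0:I) : ℝ) ≤ 1/2 then _ else _) = (s : ℝ) + ((0:I) : ℝ) * ((w : ℝ) - (s : ℝ))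
    norm_num
  · refine Subtype.ext ?_
    show (if ((1:I) : ℝ) ≤ 1/2 then _ else _) = (s : ℝ) + ((1:I) : ℝ) * ((w : ℝ) - (s : ℝ))
    norm_num
  · intro r
    rw [Path.trans_apply]
    split_ifs with h
    · refine congrArg γ (Subtype.ext ?_)
      show (s : ℝ) + ((2 * (r:ℝ))) * ((t : ℝ) - (s : ℝ)) = _
      simp only [hφdef]
      rw [if_pos h]
    · refine congrArg γ (Subtype.ext ?_)
      show (t : ℝ) + ((2 * (r:ℝ) - 1)) * ((w : ℝ) - (t : ℝ)) = _
      simp only [hφdef]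
      rw [if_neg h]
  · intro r
    rfl

noncomputable def hq {a b : M} (γ : Path a b) :
    FundamentalGroupoid.mk a ⟶ FundamentalGroupoid.mk b := ⟦γ⟧

lemma hq_trans {a b c : M} (α : Path a b) (β : Path b c) :
    hq (α.trans β) = hq α ≫ hq β := rfl

lemma hq_symm {a b : M} (α : Path a b) : hq α.symm = inv (hq α) := by
  have h : hq α.symm = Groupoid.inv (hq α) := rfl
  rw [h, Groupoid.inv_eq_inv]

lemma hq_subPath_self {a b : M} (γ : Path a b) (s : I) :
    hq (subPath γ s s) = eqToHom rfl := by
  have h : subPath γ s s = Path.refl (γ s) := by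
    ext r
    show γ ⟨(s : ℝ) + (r : ℝ) * ((s : ℝ) - (s : ℝ)), _⟩ = γ s
    refine congrArg γ (Subtype.ext ?_)
    show (s : ℝ) + (r : ℝ) * ((s : ℝ) - (s : ℝ)) = (s : ℝ)
    ring
  rw [h, eqToHom_refl]
  rfl

noncomputable def pieceChain {a b : M} (γ : Path a b) (t : ℕ → ℝ) :
    (n : ℕ) → (FundamentalGroupoid.mk (γ (pt (t 0))) ⟶ FundamentalGroupoid.mk (γ (pt (t n))))
  | 0 => 𝟙 _
  | n+1 => pieceChain γ t n ≫ hq (subPath γ (pt (t n)) (pt (t (n+1))))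

lemma pieceChain_eq {a b : M} (γ : Path a b) (t : ℕ → ℝ) (n : ℕ) :
    pieceChain γ t n = hq (subPath γ (pt (t 0)) (pt (t n))) := by
  induction n with
  | zero =>
    show 𝟙 _ = _
    rw [hq_subPath_self, eqToHom_refl]
  | succ n ih =>
    show pieceChain γ t n ≫ _ = _
    rw [ih, ← hq_trans]
    exact Quotient.sound (subPath_trans_homotopic γ _ _ _)

variable (x : M)

noncomputable def vloop (v : ∀ q : M, Path x q) (E : ∀ q q' : M, Path q q') (q q' : M) :
    FundamentalGroupoid.mk x ⟶ FundamentalGroupoid.mk x :=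
  hq (v q) ≫ hq (E q q') ≫ inv (hq (v q'))

noncomputable def vloopChain (v : ∀ q : M, Path x q) (E : ∀ q q' : M, Path q q') (f : ℕ → M) :
    ℕ → (FundamentalGroupoid.mk x ⟶ FundamentalGroupoid.mk x)
  | 0 => 𝟙 _
  | n+1 => vloopChain v E f n ≫ vloop x v E (f n) (f (n+1))

lemma vloopChain_congr (v : ∀ q : M, Path x q) (E : ∀ q q' : M, Path q q') (f g : ℕ → M)
    (n : ℕ) (h : ∀ i ≤ n, f i = g i) : vloopChain x v E f n = vloopChain x v E g n := by
  induction n with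
  | zero => rfl
  | succ n ih =>
    show vloopChain x v E f n ≫ _ = vloopChain x v E g n ≫ _
    rw [ih (fun i hi => h i (hi.trans n.le_succ)), h n n.le_succ, h (n+1) le_rfl]

lemma quad {U : Set M}
    (hU : ∀ (q : M) (ℓ : Path q q), (∀ r, ℓ r ∈ U) →
      (⟦ℓ⟧ : Path.Homotopic.Quotient q q) = ⟦Path.refl q⟧)
    {a b a' b' : M} (A : Path a b) (c : Path a a') (c' : Path b b') (e : Path a' b')
    (hA : ∀ r, A r ∈ U) (hc : ∀ r, c r ∈ U) (hc' : ∀ r, c' r ∈ U) (he : ∀ r, e r ∈ U) :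
    hq A = hq c ≫ hq e ≫ inv (hq c') := by
  have hmem : ∀ r, (((A.trans c').trans e.symm).trans c.symm) r ∈ U := by
    have hsub : Set.range (((A.trans c').trans e.symm).trans c.symm) ⊆ U := by
      rw [Path.trans_range, Path.trans_range, Path.trans_range, Path.symm_range, Path.symm_range]
      refine Set.union_subset (Set.union_subset (Set.union_subset ?_ ?_) ?_) ?_ <;>
        rw [Set.range_subset_iff] <;> assumption
    intro r
    exact hsub (Set.mem_range_self r)
  have h0 : hq (((A.trans c').trans e.symm).trans c.symm) = 𝟙 (FundamentalGroupoid.mk a) :=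
    hU a _ hmem
  rw [hq_trans, hq_trans, hq_trans, hq_symm, hq_symm] at h0
  rw [IsIso.comp_inv_eq, Category.id_comp] at h0
  rw [IsIso.comp_inv_eq] at h0
  calc hq A = (hq A ≫ hq c') ≫ inv (hq c') := by simp
    _ = (hq c ≫ hq e) ≫ inv (hq c') := by rw [h0]
    _ = hq c ≫ hq e ≫ inv (hq c') := Category.assoc _ _ _

lemma hq_cast {c d c' d' : M} (η : Path c d) (h1 : c' = c) (h2 : d' = d) :
    hq (η.cast h1 h2) = eqToHom (congrArg FundamentalGroupoid.mk h1) ≫ hq η ≫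
      eqToHom (congrArg FundamentalGroupoid.mk h2.symm) := by
  subst h1; subst h2
  simp only [eqToHom_refl, Category.comp_id, Category.id_comp]
  rfl

lemma hq_congr_fam {x : M} (g : ∀ q : M, Path x q) {a a' : M} (h : a = a') :
    hq (g a) = hq (g a') ≫ eqToHom (congrArg FundamentalGroupoid.mk h.symm) := by
  subst h; simp

lemma hq_congr_fam₂ (E : ∀ q w : M, Path q w) {q q' w w' : M} (h1 : q = q') (h2 : w = w') :
    hq (E q w) = eqToHom (congrArg FundamentalGroupoid.mk h1) ≫ hq (E q' w') ≫
      eqToHom (congrArg FundamentalGroupoid.mk h2.symm) := by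
  subst h1; subst h2; simp

end Top

lemma fromArrow_comp {X : TopCat} {x : X}
    (p q : FundamentalGroupoid.mk x ⟶ FundamentalGroupoid.mk x) :
    FundamentalGroup.fromArrow (p ≫ q) =
      FundamentalGroup.fromArrow q * FundamentalGroup.fromArrow p :=
  rfl

lemma fromArrow_inv {X : TopCat} {x : X}
    (p : FundamentalGroupoid.mk x ⟶ FundamentalGroupoid.mk x) :
    FundamentalGroup.fromArrow (inv p) = (FundamentalGroup.fromArrow p)⁻¹ :=
  (Groupoid.inv_eq_inv p).symm

section Metric
variable {M : Type*} [MetricSpace M] {a b : M}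


def goodSet (γ : Path a b) (η : ℝ) (c : ℝ) : Set ℝ :=
  {s | c ≤ s ∧ s ≤ 1 ∧ ∀ r : I, c ≤ (r : ℝ) → (r : ℝ) ≤ s → dist (γ r) (γ (pt c)) ≤ η}

lemma goodSet_bddAbove (γ : Path a b) (η c : ℝ) : BddAbove (goodSet γ η c) :=
  ⟨1, fun _ hs => hs.2.1⟩

lemma self_mem_goodSet (γ : Path a b) {η c : ℝ} (hη : 0 ≤ η) (h0 : 0 ≤ c) (h1 : c ≤ 1) :
    c ∈ goodSet γ η c := by
  refine ⟨le_rfl, h1, fun r hr1 hr2 => ?_⟩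
  have hr : r = pt c := Subtype.ext (by rw [pt_coe h0 h1]; exact le_antisymm hr2 hr1)
  rw [hr]
  simpa using hη

noncomputable def greedy (γ : Path a b) (η : ℝ) : ℕ → ℝ
  | 0 => 0
  | n+1 => sSup (goodSet γ η (greedy γ η n))

lemma greedy_nonneg_le_one (γ : Path a b) {η : ℝ} (hη : 0 ≤ η) (n : ℕ) :
    0 ≤ greedy γ η n ∧ greedy γ η n ≤ 1 := by
  induction n with
  | zero => exact ⟨le_rfl, zero_le_one⟩
  | succ n ih =>
    constructor
    · exact ih.1.trans (le_csSup (goodSet_bddAbove γ η _) (self_mem_goodSet γ hη ih.1 ih.2))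
    · exact csSup_le ⟨_, self_mem_goodSet γ hη ih.1 ih.2⟩ fun s hs => hs.2.1

lemma greedy_mono (γ : Path a b) {η : ℝ} (hη : 0 ≤ η) : Monotone (greedy γ η) := by
  apply monotone_nat_of_le_succ
  intro n
  exact le_csSup (goodSet_bddAbove γ η _)
    (self_mem_goodSet γ hη (greedy_nonneg_le_one γ hη n).1 (greedy_nonneg_le_one γ hη n).2)

lemma csSup_goodSet_mem (γ : Path a b) {η c : ℝ} (hη : 0 ≤ η) (h0 : 0 ≤ c) (h1 : c ≤ 1) :
    sSup (goodSet γ η c) ∈ goodSet γ η c := by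
  set m := sSup (goodSet γ η c) with hm
  have hmem_c : c ∈ goodSet γ η c := self_mem_goodSet γ hη h0 h1
  have hle : c ≤ m := le_csSup (goodSet_bddAbove γ η c) hmem_c
  have hm1 : m ≤ 1 := csSup_le ⟨c, hmem_c⟩ fun s hs => hs.2.1
  refine ⟨hle, hm1, fun r hcr hrm => ?_⟩
  rcases lt_or_eq_of_le hrm with hlt | heq
  · obtain ⟨s, hs, hrs⟩ := exists_lt_of_lt_csSup ⟨c, hmem_c⟩ hlt
    exact hs.2.2 r hcr hrs.le
  · rcases eq_or_lt_of_le hle with hcm | hcm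
    · have hr : r = pt c := Subtype.ext (by rw [pt_coe h0 h1, heq, ← hcm])
      rw [hr]
      simpa using hη
    · by_contra hgt
      push_neg at hgt
      have hD : 0 < dist (γ r) (γ (pt c)) - η := by linarith
      obtain ⟨δ, hδ, hcont⟩ := Metric.continuousAt_iff.mp (γ.continuous.continuousAt (x := r))
        (dist (γ r) (γ (pt c)) - η) hD
      set w₀ : ℝ := max c (m - δ / 2) with hw₀
      have hw₀0 : 0 ≤ w₀ := le_trans h0 (le_max_left _ _)
      have hw₀1 : w₀ ≤ 1 := max_le h1 (by linarith)
      have hw₀m : w₀ < m := max_lt hcm (by linarith)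
      set w : I := pt w₀ with hwdef
      have hwc : (w : ℝ) = w₀ := pt_coe hw₀0 hw₀1
      -- w is within δ of r
      have hdist_wr : dist w r < δ := by
        rw [Subtype.dist_eq, hwc, heq, Real.dist_eq, abs_of_nonpos (by linarith)]
        have : m - δ/2 ≤ w₀ := le_max_right _ _
        linarith
      -- dist (γ w) (γ (pt c)) ≤ η
      obtain ⟨s, hs, hws⟩ := exists_lt_of_lt_csSup ⟨c, hmem_c⟩ (hwc ▸ hw₀m : (w : ℝ) < m)
      have h1w : dist (γ w) (γ (pt c)) ≤ η :=
        hs.2.2 w (hwc ▸ le_max_left _ _) hws.le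
      have h2w : dist (γ w) (γ r) < dist (γ r) (γ (pt c)) - η := hcont hdist_wr
      have := dist_triangle (γ r) (γ w) (γ (pt c))
      rw [dist_comm (γ r) (γ w)] at this
      linarith

lemma greedy_piece (γ : Path a b) {η : ℝ} (hη : 0 ≤ η) (n : ℕ) :
    ∀ r : I, greedy γ η n ≤ (r : ℝ) → (r : ℝ) ≤ greedy γ η (n + 1) →
      dist (γ r) (γ (pt (greedy γ η n))) ≤ η := by
  have h := csSup_goodSet_mem γ hη (greedy_nonneg_le_one γ hη n).1 (greedy_nonneg_le_one γ hη n).2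
  exact h.2.2

lemma greedy_succ_lt (γ : Path a b) {η c : ℝ} (hη : 0 < η) (h0 : 0 ≤ c) (hc : c < 1) :
    c < sSup (goodSet γ η c) := by
  obtain ⟨δ, hδ, hcont⟩ :=
    Metric.continuousAt_iff.mp (γ.continuous.continuousAt (x := pt c)) η hη
  set s : ℝ := min 1 (c + δ / 2) with hs
  have hcs : c < s := lt_min hc (by linarith)
  have hmem : s ∈ goodSet γ η c := by
    refine ⟨hcs.le, min_le_left _ _, fun r hcr hrs => ?_⟩
    have hdist : dist r (pt c) < δ := by
      rw [Subtype.dist_eq, pt_coe h0 hc.le, Real.dist_eq, abs_of_nonneg (by linarith)]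
      have : (r : ℝ) ≤ c + δ / 2 := hrs.trans (min_le_right _ _)
      linarith
    exact (hcont hdist).le
  exact lt_of_lt_of_le hcs (le_csSup (goodSet_bddAbove γ η c) hmem)

lemma goodSet_escape (γ : Path a b) {η c s' : ℝ} (h : sSup (goodSet γ η c) < s')
    (hs'1 : s' ≤ 1) (hcs' : c ≤ s') :
    ∃ r : I, c ≤ (r : ℝ) ∧ (r : ℝ) ≤ s' ∧ η < dist (γ r) (γ (pt c)) := by
  have hns : s' ∉ goodSet γ η c := fun hmem =>
    absurd (le_csSup (goodSet_bddAbove γ η c) hmem) (not_le.mpr h)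
  simp only [goodSet, Set.mem_setOf_eq, not_and] at hns
  push_neg at hns
  obtain ⟨r, h1, h2, h3⟩ := hns hcs' hs'1
  exact ⟨r, h1, h2, h3⟩

lemma greedy_reaches (γ : Path a b) {η L : ℝ} (hη : 0 < η) (hL : 0 ≤ L)
    (hvar : eVariationOn γ Set.univ ≤ ENNReal.ofReal L) :
    greedy γ η (2 * (Nat.ceil (L / η) + 1)) = 1 := by
  set k := Nat.ceil (L / η) + 1 with hk
  by_contra hne
  have hlt : greedy γ η (2 * k) < 1 :=
    lt_of_le_of_ne (greedy_nonneg_le_one γ hη.le _).2 hne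
  have hall : ∀ j ≤ 2 * k, greedy γ η j < 1 :=
    fun j hj => lt_of_le_of_lt (greedy_mono γ hη.le hj) hlt
  -- cumulative variation lower bound
  have key : ∀ i ≤ k, ENNReal.ofReal (i * η) ≤
      eVariationOn γ (Set.univ ∩ Set.Icc (pt (greedy γ η 0)) (pt (greedy γ η (2 * i)))) := by
    intro i hi
    induction i with
    | zero => simp
    | succ i ih =>
      have hik : i ≤ k := (Nat.le_succ i).trans hi
      have h2i2 : 2 * (i + 1) ≤ 2 * k := Nat.mul_le_mul_left 2 hi
      have h2i1 : greedy γ η (2 * i + 1) < 1 := hall _ (by omega)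
      have hstep : greedy γ η (2 * i + 1) < greedy γ η (2 * i + 2) :=
        greedy_succ_lt γ hη (greedy_nonneg_le_one γ hη.le _).1 h2i1
      obtain ⟨r, hr1, hr2, hr3⟩ := goodSet_escape γ (c := greedy γ η (2 * i))
        (s' := greedy γ η (2 * i + 2)) hstep (greedy_nonneg_le_one γ hη.le _).2
        (greedy_mono γ hη.le (by omega))
      -- second piece has variation at least η
      have hpt2i : ((pt (greedy γ η (2 * i)) : I) : ℝ) = greedy γ η (2 * i) :=
        pt_coe (greedy_nonneg_le_one γ hη.le _).1 (greedy_nonneg_le_one γ hη.le _).2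
      have hpt2i2 : ((pt (greedy γ η (2 * i + 2)) : I) : ℝ) = greedy γ η (2 * i + 2) :=
        pt_coe (greedy_nonneg_le_one γ hη.le _).1 (greedy_nonneg_le_one γ hη.le _).2
      have hmem1 : pt (greedy γ η (2 * i)) ∈
          Set.univ ∩ Set.Icc (pt (greedy γ η (2 * i))) (pt (greedy γ η (2 * i + 2))) :=
        ⟨trivial, le_rfl, pt_mono (greedy_mono γ hη.le (by omega))⟩
      have hmem2 : r ∈
          Set.univ ∩ Set.Icc (pt (greedy γ η (2 * i))) (pt (greedy γ η (2 * i + 2))) := by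
        refine ⟨trivial, ?_, ?_⟩
        · show ((pt (greedy γ η (2 * i)) : I) : ℝ) ≤ (r : ℝ)
          rw [hpt2i]; exact hr1
        · show (r : ℝ) ≤ ((pt (greedy γ η (2 * i + 2)) : I) : ℝ)
          rw [hpt2i2]; exact hr2
      have hpiece : ENNReal.ofReal η ≤
          eVariationOn γ (Set.univ ∩ Set.Icc (pt (greedy γ η (2 * i))) (pt (greedy γ η (2 * i + 2)))) := by
        refine le_trans ?_ (eVariationOn.edist_le γ hmem2 hmem1)
        rw [edist_dist, dist_comm]
        exact ENNReal.ofReal_le_ofReal (by rw [dist_comm]; exact hr3.le)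
      have hadd := eVariationOn.Icc_add_Icc γ (s := Set.univ)
        (pt_mono (greedy_mono γ hη.le (by omega : 0 ≤ 2 * i)))
        (pt_mono (greedy_mono γ hη.le (by omega : 2 * i ≤ 2 * (i + 1)))) trivial
      have h2i2eq : 2 * (i + 1) = 2 * i + 2 := by ring
      rw [h2i2eq] at hadd ⊢
      calc ENNReal.ofReal ((i + 1 : ℕ) * η)
          = ENNReal.ofReal (i * η) + ENNReal.ofReal η := by
            rw [← ENNReal.ofReal_add (by positivity) hη.le]
            congr 1
            push_cast
            ring
        _ ≤ eVariationOn γ (Set.univ ∩ Set.Icc (pt (greedy γ η 0)) (pt (greedy γ η (2 * i)))) +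
            eVariationOn γ (Set.univ ∩ Set.Icc (pt (greedy γ η (2 * i))) (pt (greedy γ η (2 * i + 2)))) :=
            add_le_add (ih hik) hpiece
        _ = _ := hadd
  have hfinal := (key k le_rfl).trans
    ((eVariationOn.mono γ Set.inter_subset_left).trans hvar)
  rw [ENNReal.ofReal_le_ofReal_iff hL] at hfinal
  have hceil : L / η ≤ (Nat.ceil (L / η) : ℝ) := Nat.le_ceil _
  have : L + η ≤ k * η := by
    rw [hk]
    push_cast
    have : L = (L / η) * η := by field_simp
    nlinarith
  linarith


end Metric


lemma uniform_loc_path_conn {M : Type*} [MetricSpace M] [CompactSpace M]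
    [LocallyPathConnectedSpace M] {ε : ℝ} (hε : 0 < ε) :
    ∃ ρ > 0, ∀ q q' : M, dist q q' < ρ → JoinedIn (Metric.ball q ε) q q' := by
  have h := fun p : M => (isOpen_isPathConnected_basis p).mem_iff.mp
    (Metric.ball_mem_nhds p (by linarith : (0:ℝ) < ε / 2))
  choose V hV hVsub using h
  obtain ⟨δ, hδ, hball⟩ := lebesgue_number_lemma_of_metric (s := Set.univ) isCompact_univ
    (fun p => (hV p).1) (fun z _ => Set.mem_iUnion.mpr ⟨z, (hV z).2.1⟩)
  refine ⟨δ, hδ, fun q q' hqq' => ?_⟩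
  obtain ⟨p, hp⟩ := hball q trivial
  have hq : q ∈ V p := hp (Metric.mem_ball_self hδ)
  have hq' : q' ∈ V p := hp (by rwa [Metric.mem_ball, dist_comm])
  have hsub : V p ⊆ Metric.ball q ε := by
    intro z hz
    have h1 : dist z p < ε / 2 := hVsub p hz
    have h2 : dist q p < ε / 2 := hVsub p hq
    rw [Metric.mem_ball, dist_comm]
    calc dist q z ≤ dist q p + dist p z := dist_triangle _ _ _
      _ < ε / 2 + ε / 2 := by rw [dist_comm p z]; exact add_lt_add h2 h1
      _ = ε := by ring
  exact ((hV p).2.2.joinedIn q hq q' hq').mono hsub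

lemma exists_avoiding_normal_subgroup {G : Type*} [Group G]
    (hRF : ∀ g : G, g ≠ 1 → ∃ (Q : Type) (_ : Group Q) (_ : Fintype Q),
      ∃ φ : G →* Q, φ g ≠ 1)
    (T : Set G) (hT : T.Finite) :
    ∃ N : Subgroup G, N.Normal ∧ N.FiniteIndex ∧ ∀ g ∈ T, g ∈ N → g = 1 := by
  have key : ∀ g : G, ∃ K : Subgroup G, K.Normal ∧ K.FiniteIndex ∧ (g ≠ 1 → g ∉ K) := by
    intro g
    by_cases hg : g = 1
    · exact ⟨⊤, inferInstance, inferInstance, fun h => (h hg).elim⟩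
    · obtain ⟨Q, _, _, φ, hφ⟩ := hRF g hg
      haveI : Finite Q := Finite.of_fintype Q
      refine ⟨φ.ker, inferInstance, inferInstance,
        fun _ hk => hφ (MonoidHom.mem_ker.mp hk)⟩
  choose K hKn hKf hKg using key
  haveI := hT.to_subtype
  refine ⟨⨅ g : T, K g, ?_, ?_, ?_⟩
  · constructor
    intro n hn g
    rw [Subgroup.mem_iInf] at hn ⊢
    intro i
    exact (hKn i).conj_mem n (hn i) g
  · exact Subgroup.finiteIndex_iInf fun i => hKf i
  · intro g hg hgN
    by_contra hne
    exact hKg g hne (Subgroup.mem_iInf.mp hgN ⟨g, hg⟩)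


end ShortLoopsAux
open ShortLoopsAux in
/-- If `M` is a compact, connected, locally path-connected, semi-locally simply connected
metric space with residually finite fundamental group, then for every `L ≥ 0` there is a
finite-index normal subgroup `N` of `π₁(M, x)` such that every class `[u · γ · u⁻¹]` coming
from a loop `γ` of length at most `L` that lies in `N` is trivial. -/
theorem exists_finiteIndex_normal_excluding_short_loops {M : Type*} [MetricSpace M]
    [CompactSpace M] [ConnectedSpace M] [LocallyPathConnectedSpace M]
    (hslsc : ∀ p : M, ∃ U : Set M, IsOpen U ∧ p ∈ U ∧ ∀ (q : M) (γ : Path q q),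
      (∀ t : I, γ t ∈ U) → (⟦γ⟧ : Path.Homotopic.Quotient q q) = ⟦Path.refl q⟧)
    (x : M)
    (hRF : ∀ g : FundamentalGroup M x, g ≠ 1 → ∃ (Q : Type) (_ : Group Q) (_ : Fintype Q),
      ∃ φ : FundamentalGroup M x →* Q, φ g ≠ 1)
    (L : ℝ) (hL : 0 ≤ L) :
    ∃ N : Subgroup (FundamentalGroup M x), N.Normal ∧ N.FiniteIndex ∧
      ∀ (p : M) (γ : Path p p) (u : Path x p), pathLength γ ≤ ENNReal.ofReal L →
        loopClass ((u.trans γ).trans u.symm) ∈ N →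
        loopClass ((u.trans γ).trans u.symm) = 1 := by
  classical
  choose U hUopen hUmem hUprop using hslsc
  obtain ⟨δ, hδ, hleb⟩ := lebesgue_number_lemma_of_metric (s := Set.univ) isCompact_univ
    hUopen (fun z _ => Set.mem_iUnion.mpr ⟨z, hUmem z⟩)
  obtain ⟨ρ₀, hρ₀, hulpc⟩ := uniform_loc_path_conn (M := M) (ε := δ / 8) (by linarith)
  set ρ := min ρ₀ (δ / 8) with hρdef
  have hρ : 0 < ρ := lt_min hρ₀ (by linarith)
  have hρδ : ρ ≤ δ / 8 := min_le_right _ _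
  have hjoin : ∀ q q' : M, dist q q' < ρ → JoinedIn (Metric.ball q (δ / 8)) q q' :=
    fun q q' h => hulpc q q' (h.trans_le (min_le_left _ _))
  choose pth hpth using hjoin
  haveI : PathConnectedSpace M := pathConnectedSpace_iff_connectedSpace.mpr inferInstance
  set E : ∀ q q' : M, Path q q' := fun q q' =>
    if h : dist q q' < ρ then pth q q' h else PathConnectedSpace.somePath q q' with hEdef
  have hE : ∀ q q' : M, dist q q' < ρ → ∀ r, E q q' r ∈ Metric.ball q (δ / 8) := by
    intro q q' h r
    have hEq : E q q' = pth q q' h := by rw [hEdef]; exact dif_pos h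
    rw [hEq]
    exact hpth q q' h r
  set v : ∀ q : M, Path x q := fun q => PathConnectedSpace.somePath x q with hvdef
  set η := ρ / 8 with hηdef
  have hη : 0 < η := by positivity
  obtain ⟨F, hFsub, hFfin, hFcov⟩ := finite_cover_balls_of_compact
    (isCompact_univ (X := M)) (show (0:ℝ) < ρ / 8 by positivity)
  have hnet : ∀ z : M, ∃ g, g ∈ F ∧ dist z g < ρ / 8 := by
    intro z
    have hz := hFcov (Set.mem_univ z)
    rw [Set.mem_iUnion₂] at hz
    obtain ⟨g, hg, hzg⟩ := hz
    exact ⟨g, hg, Metric.mem_ball.mp hzg⟩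
  choose net hnetF hnetd using hnet
  set n := 2 * (Nat.ceil (L / η) + 1) with hn
  haveI : Finite ↥F := hFfin.to_subtype
  set T : Set (FundamentalGroup M x) := Set.range (fun g : Fin (n+1) → F =>
    FundamentalGroup.fromArrow (X := TopCat.of M)
      (vloopChain x v E (fun i => if h : i < n+1 then (g ⟨i, h⟩ : M) else x) n)) with hTdef
  obtain ⟨N, hNnormal, hNfinite, hNT⟩ := exists_avoiding_normal_subgroup hRF T
    (Set.finite_range _)
  refine ⟨N, hNnormal, hNfinite, ?_⟩
  intro p γ u hlen hmemN
  set t : ℕ → ℝ := greedy γ η with htdef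
  have h01 : ∀ i, 0 ≤ t i ∧ t i ≤ 1 := fun i => greedy_nonneg_le_one γ hη.le i
  have hmono : ∀ {i j}, i ≤ j → t i ≤ t j := fun h => greedy_mono γ hη.le h
  have htN : t n = 1 := greedy_reaches γ hη hL (by simpa [pathLength] using hlen)
  have hpc : ∀ i, ((pt (t i) : I) : ℝ) = t i := fun i => pt_coe (h01 i).1 (h01 i).2
  set q : ℕ → M := fun i => γ (pt (t i)) with hqdef
  set f : ℕ → M := fun i => net (q i) with hfdef
  have hpiece : ∀ i, ∀ r : I, t i ≤ (r:ℝ) → (r:ℝ) ≤ t (i+1) → dist (γ r) (q i) ≤ η :=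
    fun i => greedy_piece γ hη.le i
  have hqq : ∀ i, dist (q i) (q (i+1)) ≤ η := by
    intro i
    have h := hpiece i (pt (t (i+1))) (by rw [hpc]; exact hmono (Nat.le_succ i))
      (by rw [hpc])
    rw [dist_comm]
    exact h
  have hqf : ∀ i, dist (q i) (f i) < ρ / 8 := fun i => hnetd (q i)
  have hff : ∀ i, dist (f i) (f (i+1)) < ρ := by
    intro i
    have h4 := dist_triangle4 (f i) (q i) (q (i+1)) (f (i+1))
    have h1 : dist (f i) (q i) < ρ / 8 := by rw [dist_comm]; exact hqf i
    have h2 := hqq i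
    have h3 := hqf (i+1)
    rw [hηdef] at h2
    linarith
  -- quadrilateral equalities
  have hquad : ∀ i, hq (subPath γ (pt (t i)) (pt (t (i+1)))) =
      hq (E (q i) (f i)) ≫ hq (E (f i) (f (i+1))) ≫ inv (hq (E (q (i+1)) (f (i+1)))) := by
    intro i
    obtain ⟨z, hz⟩ := hleb (q i) (Set.mem_univ _)
    apply quad (hUprop z)
    · intro r
      obtain ⟨w, hw1, hw2, hw3⟩ := subPath_mem γ (pt_mono (hmono (Nat.le_succ i))) r
      rw [hw3]
      apply hz
      rw [Metric.mem_ball]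
      have hww : t i ≤ (w : ℝ) := by rw [← hpc i]; exact hw1
      have hww2 : (w : ℝ) ≤ t (i+1) := by rw [← hpc (i+1)]; exact hw2
      have := hpiece i w hww hww2
      rw [hηdef] at this
      linarith
    · intro r
      apply hz
      have h1 := hE (q i) (f i) (lt_of_lt_of_le (hqf i) (by linarith)) r
      rw [Metric.mem_ball] at h1 ⊢
      linarith
    · intro r
      apply hz
      have h1 := hE (q (i+1)) (f (i+1)) (lt_of_lt_of_le (hqf (i+1)) (by linarith)) r
      rw [Metric.mem_ball] at h1 ⊢
      have h2 := hqq i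
      rw [hηdef] at h2
      have h3 := dist_triangle (E (q (i+1)) (f (i+1)) r) (q (i+1)) (q i)
      rw [dist_comm (q (i+1)) (q i)] at h3
      linarith
    · intro r
      apply hz
      have h1 := hE (f i) (f (i+1)) (hff i) r
      rw [Metric.mem_ball] at h1 ⊢
      have h2 : dist (f i) (q i) < ρ / 8 := by rw [dist_comm]; exact hqf i
      have h3 := dist_triangle (E (f i) (f (i+1)) r) (f i) (q i)
      linarith
  -- telescoping
  have htel : ∀ m, pieceChain γ t m =
      hq (E (q 0) (f 0)) ≫ inv (hq (v (f 0))) ≫ vloopChain x v E f m ≫ hq (v (f m)) ≫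
        inv (hq (E (q m) (f m))) := by
    intro m
    induction m with
    | zero =>
      show 𝟙 _ = hq (E (q 0) (f 0)) ≫ inv (hq (v (f 0))) ≫ 𝟙 _ ≫ hq (v (f 0)) ≫
        inv (hq (E (q 0) (f 0)))
      simp
    | succ m ih =>
      show pieceChain γ t m ≫ hq (subPath γ (pt (t m)) (pt (t (m+1)))) = _
      rw [ih, hquad m]
      show _ = hq (E (q 0) (f 0)) ≫ inv (hq (v (f 0))) ≫
        (vloopChain x v E f m ≫ vloop x v E (f m) (f (m+1))) ≫ hq (v (f (m+1))) ≫
          inv (hq (E (q (m+1)) (f (m+1))))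
      simp [vloop]
  -- endpoints
  have ht0 : t 0 = 0 := rfl
  have hpt0 : pt (t 0) = 0 := Subtype.ext (by rw [hpc 0, ht0]; simp)
  have hpt1 : pt (t n) = 1 := Subtype.ext (by rw [hpc n, htN]; simp)
  have hq0 : q 0 = p := by show γ (pt (t 0)) = p; rw [hpt0]; exact γ.source
  have hqn : q n = p := by show γ (pt (t n)) = p; rw [hpt1]; exact γ.target
  have hqn0 : q n = q 0 := by rw [hqn, hq0]
  have hfn0 : f n = f 0 := by show net (q n) = net (q 0); rw [hqn0]
  have hγeq : γ = (subPath γ (pt (t 0)) (pt (t n))).cast hq0.symm hqn.symm := by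
    ext r
    show γ r = γ ⟨((pt (t 0) : I) : ℝ) + (r : ℝ) * (((pt (t n) : I) : ℝ) - ((pt (t 0) : I) : ℝ)), _⟩
    refine congrArg γ (Subtype.ext ?_)
    show (r : ℝ) = ((pt (t 0) : I) : ℝ) + (r : ℝ) * (((pt (t n) : I) : ℝ) - ((pt (t 0) : I) : ℝ))
    rw [hpc 0, hpc n, htN, ht0]
    ring
  have hγhom : hq γ = eqToHom (congrArg FundamentalGroupoid.mk hq0.symm) ≫
      pieceChain γ t n ≫ eqToHom (congrArg FundamentalGroupoid.mk hqn) := by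
    calc hq γ = hq ((subPath γ (pt (t 0)) (pt (t n))).cast hq0.symm hqn.symm) := by
          rw [← hγeq]
      _ = eqToHom (congrArg FundamentalGroupoid.mk hq0.symm) ≫
            hq (subPath γ (pt (t 0)) (pt (t n))) ≫
            eqToHom (congrArg FundamentalGroupoid.mk hqn.symm.symm) := hq_cast _ _ _
      _ = _ := by rw [← pieceChain_eq]
  have hbig : hq ((u.trans γ).trans u.symm) =
      (hq u ≫ eqToHom (congrArg FundamentalGroupoid.mk hq0.symm) ≫ hq (E (q 0) (f 0)) ≫
        inv (hq (v (f 0)))) ≫ vloopChain x v E f n ≫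
      (hq (v (f n)) ≫ inv (hq (E (q n) (f n))) ≫
        eqToHom (congrArg FundamentalGroupoid.mk hqn) ≫ inv (hq u)) := by
    rw [hq_trans, hq_trans, hq_symm, hγhom, htel n]
    simp only [Category.assoc]
  set A : FundamentalGroupoid.mk x ⟶ FundamentalGroupoid.mk x :=
    hq u ≫ eqToHom (congrArg FundamentalGroupoid.mk hq0.symm) ≫ hq (E (q 0) (f 0)) ≫
      inv (hq (v (f 0))) with hAdef
  have hABone : A ≫ (hq (v (f n)) ≫ inv (hq (E (q n) (f n))) ≫
      eqToHom (congrArg FundamentalGroupoid.mk hqn) ≫ inv (hq u)) = 𝟙 _ := by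
    rw [hq_congr_fam (x := x) v hfn0, hq_congr_fam₂ E hqn0 hfn0, hAdef]
    simp
  have hbig' : hq ((u.trans γ).trans u.symm) = A ≫ vloopChain x v E f n ≫ inv A := by
    rw [hbig, (IsIso.inv_eq_of_hom_inv_id hABone)]
  -- pass to the fundamental group
  set w : FundamentalGroup M x :=
    (FundamentalGroup.fromArrow (X := TopCat.of M) (vloopChain x v E f n) :
      FundamentalGroup M x) with hwdef
  set W : FundamentalGroup M x :=
    (FundamentalGroup.fromArrow (X := TopCat.of M) A : FundamentalGroup M x) with hWdef
  have hgrp : loopClass ((u.trans γ).trans u.symm) = W⁻¹ * w * W := by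
    have h0 : loopClass ((u.trans γ).trans u.symm) =
        (FundamentalGroup.fromArrow (X := TopCat.of M) (hq ((u.trans γ).trans u.symm)) :
          FundamentalGroup M x) := rfl
    rw [h0, hwdef, hWdef]
    show (FundamentalGroup.fromArrow (X := TopCat.of M) (hq ((u.trans γ).trans u.symm)) :
        FundamentalGroup M x) =
      (FundamentalGroup.fromArrow (X := TopCat.of M) A)⁻¹ *
        FundamentalGroup.fromArrow (X := TopCat.of M) (vloopChain x v E f n) *
        FundamentalGroup.fromArrow (X := TopCat.of M) A
    rw [hbig']
    exact (fromArrow_comp (X := TopCat.of M) (x := x) A _).trans (congrArg (· * _)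
      ((fromArrow_comp (X := TopCat.of M) (x := x) _ _).trans
        (congrArg (· * _) (fromArrow_inv (X := TopCat.of M) (x := x) A))))
  have hwT : w ∈ T := by
    rw [hwdef, hTdef]
    refine ⟨fun i => (⟨f i, hnetF (q i)⟩ : F), ?_⟩
    refine congrArg _ (vloopChain_congr x v E _ f n ?_)
    intro i hi
    simp [dif_pos (Nat.lt_succ_of_le hi)]
    exact fun h => absurd h (by omega)
  have hwN : w ∈ N := by
    have hconj : w = W * loopClass ((u.trans γ).trans u.symm) * W⁻¹ := by
      rw [hgrp]; group
    rw [hconj]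
    exact hNnormal.conj_mem _ hmemN W
  have hw1 : w = 1 := hNT w hwT hwN
  rw [hgrp, hw1]
  group
end

section
/- Let M be a metric space in which, for every two points p, q and every ε > 0, there is a path from p to q of length less than d(p,q) + ε. Let x₀ ∈ M, let h : π₁(M, x₀) → ℤ be a group homomorphism, and let L > 0. Assume that for every loop γ in M of length less than L and every path u from x₀ to γ(0), one has h([u · γ · u⁻¹]) = 0. Then for every p ∈ M and every t > 0 with 2t < L, every loop γ of finite length whose image is contained in the open ball B(p, t), and every path u from x₀ to γ(0), one has h([u · γ · u⁻¹]) = 0. -/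
open scoped unitInterval

attribute [local instance] Path.Homotopic.setoid

namespace MacroscopicAux

open CategoryTheory

/-! ### Algebraic lemmas about conjugated loop values -/

section Alg
variable {M : Type*} [TopologicalSpace M] {x₀ : M}
variable (h : FundamentalGroup M x₀ →* Multiplicative ℤ)

/-- `h` applied to an endomorphism of the basepoint in the fundamental groupoid. -/
noncomputable def Phi (e : FundamentalGroupoid.mk x₀ ⟶ FundamentalGroupoid.mk x₀) :
    Multiplicative ℤ :=
  h (FundamentalGroup.fromArrow (X := TopCat.of M) e)

lemma Phi_comp (e e' : FundamentalGroupoid.mk x₀ ⟶ FundamentalGroupoid.mk x₀) :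
    Phi h (e ≫ e') = Phi h e * Phi h e' := by
  have : FundamentalGroup.fromArrow (X := TopCat.of M) (e ≫ e')
      = FundamentalGroup.fromArrow (X := TopCat.of M) e'
        * FundamentalGroup.fromArrow (X := TopCat.of M) e := by
    rfl
  rw [Phi, this, map_mul, mul_comm]
  rfl

lemma Phi_id : Phi h (𝟙 (FundamentalGroupoid.mk x₀)) = 1 := by
  have : FundamentalGroup.fromArrow (X := TopCat.of M) (𝟙 (FundamentalGroupoid.mk x₀)) = 1 := by
    rfl
  rw [Phi, this, map_one]

variable (c : ∀ a : M, Path x₀ a)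

/-- Conjugated value of a path class. -/
noncomputable def valH {a b : M} (e : FundamentalGroupoid.mk a ⟶ FundamentalGroupoid.mk b) :
    Multiplicative ℤ :=
  Phi h ((⟦c a⟧ : FundamentalGroupoid.mk x₀ ⟶ FundamentalGroupoid.mk a) ≫ e ≫
    Groupoid.inv (⟦c b⟧ : FundamentalGroupoid.mk x₀ ⟶ FundamentalGroupoid.mk b))

lemma valH_comp {a b d : M} (e : FundamentalGroupoid.mk a ⟶ FundamentalGroupoid.mk b)
    (e' : FundamentalGroupoid.mk b ⟶ FundamentalGroupoid.mk d) :
    valH h c (e ≫ e') = valH h c e * valH h c e' := by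
  rw [valH, valH, valH, ← Phi_comp]
  congr 1
  simp

lemma valH_id (a : M) : valH h c (𝟙 (FundamentalGroupoid.mk a)) = 1 := by
  rw [valH]
  simp [Phi_id]

lemma quot_trans {a b d : M} (P : Path a b) (Q : Path b d) :
    @Eq (FundamentalGroupoid.mk a ⟶ FundamentalGroupoid.mk d) ⟦P.trans Q⟧
      ((⟦P⟧ : FundamentalGroupoid.mk a ⟶ FundamentalGroupoid.mk b) ≫
        (⟦Q⟧ : FundamentalGroupoid.mk b ⟶ FundamentalGroupoid.mk d)) :=
  rfl

lemma quot_symm {a b : M} (P : Path a b) :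
    @Eq (FundamentalGroupoid.mk b ⟶ FundamentalGroupoid.mk a) ⟦P.symm⟧
      (Groupoid.inv (⟦P⟧ : FundamentalGroupoid.mk a ⟶ FundamentalGroupoid.mk b)) := rfl

lemma valH_inv {a b : M} (e : FundamentalGroupoid.mk a ⟶ FundamentalGroupoid.mk b) :
    valH h c (Groupoid.inv e) = (valH h c e)⁻¹ := by
  have h1 : valH h c e * valH h c (Groupoid.inv e) = 1 := by
    rw [← valH_comp]
    simp [valH_id]
  exact eq_inv_of_mul_eq_one_left (by rw [mul_comm] at h1; exact h1)

lemma loopClass_eq_valH {a : M} (γ : Path a a) (u : Path x₀ a) :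
    h (loopClass ((u.trans γ).trans u.symm))
      = Phi h ((⟦u⟧ : FundamentalGroupoid.mk x₀ ⟶ FundamentalGroupoid.mk a) ≫
          (⟦γ⟧ : FundamentalGroupoid.mk a ⟶ FundamentalGroupoid.mk a) ≫
          Groupoid.inv (⟦u⟧ : FundamentalGroupoid.mk x₀ ⟶ FundamentalGroupoid.mk a)) := by
  have : @Eq (FundamentalGroupoid.mk x₀ ⟶ FundamentalGroupoid.mk x₀)
      ⟦(u.trans γ).trans u.symm⟧
      ((⟦u⟧ : FundamentalGroupoid.mk x₀ ⟶ FundamentalGroupoid.mk a) ≫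
        (⟦γ⟧ : FundamentalGroupoid.mk a ⟶ FundamentalGroupoid.mk a) ≫
        Groupoid.inv (⟦u⟧ : FundamentalGroupoid.mk x₀ ⟶ FundamentalGroupoid.mk a)) := by
    rw [quot_trans, quot_trans, quot_symm]; exact Category.assoc _ _ _
  rw [loopClass, ← this]
  rfl

/-- `valH` of a loop class equals the `h`-value of the conjugated loop, for any conjugating
path `u`. -/
lemma valH_loop {a : M} (γ : Path a a) (u : Path x₀ a) :
    h (loopClass ((u.trans γ).trans u.symm)) = valH h c ⟦γ⟧ := by
  rw [loopClass_eq_valH]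
  set e : FundamentalGroupoid.mk x₀ ⟶ FundamentalGroupoid.mk a := ⟦u⟧ with he
  set ca : FundamentalGroupoid.mk x₀ ⟶ FundamentalGroupoid.mk a := ⟦c a⟧ with hca
  set g : FundamentalGroupoid.mk a ⟶ FundamentalGroupoid.mk a := ⟦γ⟧ with hg
  have key : e ≫ g ≫ Groupoid.inv e
      = (e ≫ Groupoid.inv ca) ≫ (ca ≫ g ≫ Groupoid.inv ca) ≫ (ca ≫ Groupoid.inv e) := by
    simp
  rw [key, Phi_comp, Phi_comp]
  have h2 : Phi h (e ≫ Groupoid.inv ca) * Phi h (ca ≫ Groupoid.inv e) = 1 := by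
    rw [← Phi_comp]
    have : (e ≫ Groupoid.inv ca) ≫ ca ≫ Groupoid.inv e = 𝟙 _ := by simp
    rw [this, Phi_id]
  calc Phi h (e ≫ Groupoid.inv ca) * (Phi h (ca ≫ g ≫ Groupoid.inv ca) *
        Phi h (ca ≫ Groupoid.inv e))
      = (Phi h (e ≫ Groupoid.inv ca) * Phi h (ca ≫ Groupoid.inv e)) *
        Phi h (ca ≫ g ≫ Groupoid.inv ca) := by
        rw [mul_comm (Phi h (ca ≫ g ≫ Groupoid.inv ca)), ← mul_assoc]
    _ = valH h c ⟦γ⟧ := by rw [h2, one_mul]; rfl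

lemma valH_cast {a b a' b' : M} (P : Path a b) (hx : a' = a) (hy : b' = b) :
    valH h c ⟦P.cast hx hy⟧ = valH h c ⟦P⟧ := by
  subst hx; subst hy
  have : P.cast rfl rfl = P := by
    ext s
    rfl
  rw [this]

end Alg

/-! ### The affine segment of a path, and its homotopy properties -/

section Seg
variable {M : Type*} [TopologicalSpace M] {a b : M}

lemma sigma_mem (r s : I) (u : I) : (1 - (u:ℝ)) * r + u * s ∈ I := by
  constructor
  · have := u.2.1; have := u.2.2; have := r.2.1; have := s.2.1
    nlinarith
  · have := u.2.1; have := u.2.2; have := r.2.2; have := s.2.2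
    nlinarith

/-- The affine reparametrization map sending `[0,1]` onto `[r,s]`. -/
noncomputable def aff (r s : I) : I → I := fun u => ⟨(1 - (u:ℝ)) * r + u * s, sigma_mem r s u⟩

lemma aff_continuous (r s : I) : Continuous (aff r s) := by
  apply Continuous.subtype_mk
  fun_prop

@[simp] lemma aff_zero (r s : I) : aff r s 0 = r := by
  simp [aff]

@[simp] lemma aff_one (r s : I) : aff r s 1 = s := by
  apply Subtype.ext
  simp [aff]

/-- The restriction of a path to the (possibly degenerate) subinterval `[r, s]`,
  affinely reparametrized. -/
noncomputable def seg (γ : Path a b) (r s : I) : Path (γ r) (γ s) where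
  toFun := fun u => γ (aff r s u)
  continuous_toFun := γ.continuous.comp (aff_continuous r s)
  source' := by simp
  target' := by simp

@[simp] lemma seg_apply (γ : Path a b) (r s u : I) : seg γ r s u = γ (aff r s u) := rfl

lemma seg_zero_one (γ : Path a b) : seg γ 0 1 = γ.cast γ.source γ.target := by
  ext u
  show γ (aff 0 1 u) = γ u
  congr 1
  apply Subtype.ext
  simp [aff]

lemma seg_self (γ : Path a b) (r : I) : seg γ r r = Path.refl (γ r) := by
  ext u
  show γ (aff r r u) = γ r
  congr 1
  apply Subtype.ext
  show (1 - (u:ℝ)) * r + u * r = (r:ℝ)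
  ring

/-- Two paths that both factor through `γ` by continuous maps `I → I` with matching
endpoints are homotopic. -/
lemma homotopic_of_comp (γ : Path a b) {A B : M} (P Q : Path A B) (f g : I → I)
    (hf : Continuous f) (hg : Continuous g) (hP : ∀ u, P u = γ (f u)) (hQ : ∀ u, Q u = γ (g u))
    (h0 : f 0 = g 0) (h1 : f 1 = g 1) : P.Homotopic Q := by
  refine ⟨{ toFun := fun x => γ ⟨(1 - (x.1:ℝ)) * (f x.2) + x.1 * (g x.2), sigma_mem _ _ _⟩
            map_zero_left := ?_
            map_one_left := ?_
            prop' := ?_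
            continuous_toFun := by fun_prop }⟩
  · intro u
    show γ _ = P.toContinuousMap u
    rw [show P.toContinuousMap u = P u from rfl, hP u]
    congr 1
    apply Subtype.ext
    simp
  · intro u
    show γ _ = Q.toContinuousMap u
    rw [show Q.toContinuousMap u = Q u from rfl, hQ u]
    congr 1
    apply Subtype.ext
    simp
  · intro t u hu
    simp only [Set.mem_insert_iff, Set.mem_singleton_iff] at hu
    rcases hu with hu | hu <;> subst hu
    · show γ _ = P.toContinuousMap 0
      rw [show P.toContinuousMap 0 = P 0 from rfl, hP 0]
      congr 1
      apply Subtype.ext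
      show (1 - (t:ℝ)) * (f 0) + t * (g 0) = (f 0 : ℝ)
      rw [h0]
      ring
    · show γ _ = P.toContinuousMap 1
      rw [show P.toContinuousMap 1 = P 1 from rfl, hP 1]
      congr 1
      apply Subtype.ext
      show (1 - (t:ℝ)) * (f 1) + t * (g 1) = (f 1 : ℝ)
      rw [h1]
      ring

lemma affPair_mem (r m s : I) (u : I) :
    (if (u:ℝ) ≤ 1/2 then (1 - 2*(u:ℝ)) * r + (2*u) * m else (2 - 2*(u:ℝ)) * m + (2*u - 1) * s)
      ∈ I := by
  split_ifs with hu
  · constructor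
    · have := u.2.1; have := r.2.1; have := m.2.1; nlinarith
    · have := u.2.1; have := r.2.2; have := m.2.2; nlinarith
  · push_neg at hu
    constructor
    · have := u.2.2; have := m.2.1; have := s.2.1; nlinarith
    · have := u.2.2; have := m.2.2; have := s.2.2; nlinarith

/-- The reparametrization map for the concatenation of two affine segments. -/
noncomputable def affPair (r m s : I) : I → I := fun u =>
  ⟨if (u:ℝ) ≤ 1/2 then (1 - 2*(u:ℝ)) * r + (2*u) * m else (2 - 2*(u:ℝ)) * m + (2*u - 1) * s,
    affPair_mem r m s u⟩

lemma affPair_continuous (r m s : I) : Continuous (affPair r m s) := by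
  apply Continuous.subtype_mk
  apply Continuous.if_le
  · fun_prop
  · fun_prop
  · fun_prop
  · fun_prop
  · intro x hx
    rw [hx]
    ring

lemma seg_trans_homotopic (γ : Path a b) (r m s : I) :
    ((seg γ r m).trans (seg γ m s)).Homotopic (seg γ r s) := by
  apply homotopic_of_comp γ _ _ (affPair r m s) (aff r s) (affPair_continuous r m s)
    (aff_continuous r s)
  · intro u
    rw [Path.trans_apply]
    split_ifs with hu
    · show γ _ = γ _
      congr 1
      apply Subtype.ext
      show (1 - (2*(u:ℝ))) * r + (2*u) * m
        = if (u:ℝ) ≤ 1/2 then (1 - 2*(u:ℝ)) * r + (2*u) * m else _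
      rw [if_pos hu]
    · show γ _ = γ _
      congr 1
      apply Subtype.ext
      show (1 - (2*(u:ℝ)-1)) * m + (2*u-1) * s
        = if (u:ℝ) ≤ 1/2 then _ else (2 - 2*(u:ℝ)) * m + (2*u - 1) * s
      rw [if_neg hu]
      ring
  · intro u; rfl
  · apply Subtype.ext
    show (if (0:ℝ) ≤ 1/2 then (1 - 2*(0:ℝ)) * r + (2*(0:ℝ)) * m else _) = (1 - (0:ℝ)) * r + 0 * s
    rw [if_pos (by norm_num)]
    ring
  · apply Subtype.ext
    show (if (1:ℝ) ≤ 1/2 then _ else (2 - 2*(1:ℝ)) * m + (2*(1:ℝ) - 1) * s)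
      = (1 - (1:ℝ)) * r + 1 * s
    rw [if_neg (by norm_num)]
    ring

open CategoryTheory in
lemma seg_split (γ : Path a b) (r m s : I) :
    @Eq (FundamentalGroupoid.mk (γ r) ⟶ FundamentalGroupoid.mk (γ s)) ⟦seg γ r s⟧
      ((⟦seg γ r m⟧ : FundamentalGroupoid.mk (γ r) ⟶ FundamentalGroupoid.mk (γ m)) ≫
       (⟦seg γ m s⟧ : FundamentalGroupoid.mk (γ m) ⟶ FundamentalGroupoid.mk (γ s))) := by
  have h1 : @Eq (Path.Homotopic.Quotient (γ r) (γ s)) ⟦seg γ r s⟧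
      ⟦(seg γ r m).trans (seg γ m s)⟧ := Quotient.sound (seg_trans_homotopic γ r m s).symm
  exact h1.trans (quot_trans _ _)

end Seg
end MacroscopicAux

namespace MacroscopicAux

/-! ### Metric lemmas -/

section Metric
variable {M : Type*} [MetricSpace M] {a b d : M}

lemma Icc_zero_one : (Set.Icc (0:I) 1) = Set.univ := by
  ext x
  simp [unitInterval.nonneg', unitInterval.le_one']

lemma pathLength_symm (P : Path a b) : pathLength P.symm = pathLength P := by
  have h1 : eVariationOn (⇑P ∘ unitInterval.symm) Set.univ
      = eVariationOn P (unitInterval.symm '' Set.univ) := by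
    apply eVariationOn.comp_eq_of_antitoneOn
    intro x _ y _ hxy
    exact unitInterval.symm_le_symm.mpr hxy
  have h2 : unitInterval.symm '' Set.univ = Set.univ := by
    rw [Set.image_univ]
    exact (Function.Surjective.range_eq (fun y => ⟨unitInterval.symm y, unitInterval.symm_symm y⟩))
  rw [pathLength, pathLength]
  rw [show (⇑P.symm) = (⇑P ∘ unitInterval.symm) from rfl, h1, h2]

noncomputable def half : I := ⟨1/2, by norm_num, by norm_num⟩

noncomputable def phi1 : I → I := fun u => ⟨min (2*(u:ℝ)) 1, by
  constructor
  · exact le_min (by have := u.2.1; linarith) zero_le_one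
  · exact min_le_right _ _⟩

noncomputable def phi2 : I → I := fun u => ⟨max (2*(u:ℝ)-1) 0, by
  constructor
  · exact le_max_right _ _
  · exact max_le (by have := u.2.2; linarith) zero_le_one⟩

lemma pathLength_trans (P : Path a b) (Q : Path b d) :
    pathLength (P.trans Q) = pathLength P + pathLength Q := by
  have key := eVariationOn.Icc_add_Icc (⇑(P.trans Q)) (s := Set.univ)
    (unitInterval.nonneg' : (0:I) ≤ half) (unitInterval.le_one' : half ≤ 1) (Set.mem_univ half)
  rw [Set.univ_inter, Set.univ_inter, Set.univ_inter, Icc_zero_one] at key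
  have h1 : eVariationOn (⇑(P.trans Q)) (Set.Icc 0 half) = pathLength P := by
    have e1 : Set.EqOn (⇑(P.trans Q)) (⇑P ∘ phi1) (Set.Icc 0 half) := by
      intro u hu
      have hu2 : (u:ℝ) ≤ 1/2 := hu.2
      rw [Path.trans_apply]
      rw [dif_pos hu2]
      show P _ = P (phi1 u)
      congr 1
      apply Subtype.ext
      show 2*(u:ℝ) = min (2*(u:ℝ)) 1
      rw [min_eq_left (by linarith)]
    have e2 : MonotoneOn phi1 (Set.Icc 0 half) := by
      intro x _ y _ hxy
      show (⟨min (2*(x:ℝ)) 1, _⟩ : I) ≤ ⟨min (2*(y:ℝ)) 1, _⟩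
      refine Subtype.mk_le_mk.mpr ?_
      have : (x:ℝ) ≤ y := hxy
      exact min_le_min (by linarith) le_rfl
    have e3 : phi1 '' (Set.Icc 0 half) = Set.univ := by
      apply Set.eq_univ_of_forall
      intro y
      refine ⟨⟨(y:ℝ)/2, by constructor <;> (have h1 := y.2.1; have h2 := y.2.2; linarith)⟩,
        ⟨?_, ?_⟩, ?_⟩
      · show (0:I) ≤ _
        exact unitInterval.nonneg'
      · show ((y:ℝ)/2 : ℝ) ≤ (half:ℝ)
        show (y:ℝ)/2 ≤ 1/2
        have := y.2.2; linarith
      · apply Subtype.ext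
        show min (2*((y:ℝ)/2)) 1 = (y:ℝ)
        rw [show 2*((y:ℝ)/2) = (y:ℝ) by ring, min_eq_left y.2.2]
    rw [eVariationOn.eq_of_eqOn e1, eVariationOn.comp_eq_of_monotoneOn _ _ e2, e3, pathLength]
  have h2 : eVariationOn (⇑(P.trans Q)) (Set.Icc half 1) = pathLength Q := by
    have e1 : Set.EqOn (⇑(P.trans Q)) (⇑Q ∘ phi2) (Set.Icc half 1) := by
      intro u hu
      have hu2 : (1:ℝ)/2 ≤ (u:ℝ) := hu.1
      rw [Path.trans_apply]
      by_cases hc : (u:ℝ) ≤ 1/2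
      · have hu12 : (u:ℝ) = 1/2 := le_antisymm hc hu2
        have harg : (2:ℝ)*(u:ℝ) ∈ I := ⟨by have := u.2.1; linarith, by linarith⟩
        rw [dif_pos hc]
        have e1' : (⟨2*(u:ℝ), harg⟩ : I) = 1 := Subtype.ext (by show 2*(u:ℝ) = 1; rw [hu12]; ring)
        have e2' : phi2 u = 0 := Subtype.ext (by show max (2*(u:ℝ)-1) 0 = 0; rw [hu12]; norm_num)
        show P ⟨2*(u:ℝ), harg⟩ = (⇑Q ∘ phi2) u
        show P ⟨2*(u:ℝ), harg⟩ = Q (phi2 u)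
        rw [e1', e2', Path.target, Path.source]
      · rw [dif_neg hc]
        show Q _ = Q (phi2 u)
        congr 1
        apply Subtype.ext
        show 2*(u:ℝ)-1 = max (2*(u:ℝ)-1) 0
        push_neg at hc
        rw [max_eq_left (by linarith)]
    have e2 : MonotoneOn phi2 (Set.Icc half 1) := by
      intro x _ y _ hxy
      rw [Subtype.mk_le_mk]
      have : (x:ℝ) ≤ y := hxy
      exact max_le_max (by linarith) le_rfl
    have e3 : phi2 '' (Set.Icc half 1) = Set.univ := by
      apply Set.eq_univ_of_forall
      intro y
      refine ⟨⟨((y:ℝ)+1)/2, by constructor <;> (have h1 := y.2.1; have h2 := y.2.2; linarith)⟩,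
        ⟨?_, ?_⟩, ?_⟩
      · show ((half:I):ℝ) ≤ _
        show (1:ℝ)/2 ≤ ((y:ℝ)+1)/2
        have := y.2.1; linarith
      · show (_:ℝ) ≤ 1
        show ((y:ℝ)+1)/2 ≤ 1
        have := y.2.2; linarith
      · apply Subtype.ext
        show max (2*(((y:ℝ)+1)/2)-1) 0 = (y:ℝ)
        rw [show 2*(((y:ℝ)+1)/2)-1 = (y:ℝ) by ring, max_eq_left y.2.1]
    rw [eVariationOn.eq_of_eqOn e1, eVariationOn.comp_eq_of_monotoneOn _ _ e2, e3, pathLength]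
  rw [pathLength, ← key, h1, h2]

lemma aff_image (r s : I) (hrs : r ≤ s) : aff r s '' Set.univ = Set.Icc r s := by
  ext z
  simp only [Set.image_univ, Set.mem_range, Set.mem_Icc]
  constructor
  · rintro ⟨u, rfl⟩
    have hrs' : (r:ℝ) ≤ s := hrs
    have h1 := u.2.1; have h2 := u.2.2
    constructor
    · show (r:ℝ) ≤ (1 - (u:ℝ)) * r + u * s
      nlinarith
    · show ((1 - (u:ℝ)) * r + u * s : ℝ) ≤ s
      nlinarith
  · rintro ⟨h1, h2⟩
    by_cases hd : (r:ℝ) = s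
    · refine ⟨0, ?_⟩
      apply Subtype.ext
      show (1 - ((0:I):ℝ)) * r + ((0:I):ℝ) * s = (z:ℝ)
      have h1' : (r:ℝ) ≤ z := h1
      have h2' : (z:ℝ) ≤ s := h2
      rw [← hd] at h2'
      have : (z:ℝ) = r := le_antisymm h2' h1'
      rw [this]
      norm_num
    · have hlt : (r:ℝ) < s := lt_of_le_of_ne hrs hd
      have h1' : (r:ℝ) ≤ z := h1
      have h2' : (z:ℝ) ≤ s := h2
      refine ⟨⟨((z:ℝ) - r) / (s - r), ⟨div_nonneg (by linarith) (by linarith), ?_⟩⟩, ?_⟩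
      · rw [div_le_one (by linarith)]
        linarith
      · apply Subtype.ext
        show (1 - ((z:ℝ) - r) / (s - r)) * r + (((z:ℝ) - r) / (s - r)) * s = (z:ℝ)
        have hne : (s:ℝ) - r ≠ 0 := by linarith
        field_simp
        ring

lemma seg_length (γ : Path a b) (r s : I) (hrs : r ≤ s) :
    pathLength (seg γ r s) = eVariationOn γ (Set.Icc r s) := by
  have haff : MonotoneOn (aff r s) Set.univ := by
    intro x _ y _ hxy
    show ((1 - (x:ℝ)) * r + x * s : ℝ) ≤ (1 - (y:ℝ)) * r + y * s
    have : (x:ℝ) ≤ y := hxy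
    have hrs' : (r:ℝ) ≤ s := hrs
    nlinarith
  have := eVariationOn.comp_eq_of_monotoneOn (⇑γ) (aff r s) haff
  rw [show (⇑γ ∘ aff r s) = ⇑(seg γ r s) from rfl] at this
  rw [pathLength, this, aff_image r s hrs]

end Metric
end MacroscopicAux

namespace MacroscopicAux

section Part
variable {M : Type*} [MetricSpace M] {a b : M}

lemma sum_eVar (γ : Path a b) (y : ℕ → I) (hy : Monotone y) (m : ℕ) :
    ∑ j ∈ Finset.range m, eVariationOn γ (Set.Icc (y j) (y (j+1)))
      = eVariationOn γ (Set.Icc (y 0) (y m)) := by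
  induction m with
  | zero =>
    rw [Finset.sum_range_zero, Set.Icc_self]
    exact (eVariationOn.subsingleton _ Set.subsingleton_singleton).symm
  | succ m ih =>
    rw [Finset.sum_range_succ, ih]
    have key := eVariationOn.Icc_add_Icc (⇑γ) (s := Set.univ)
      (hy (Nat.zero_le m)) (hy (Nat.le_succ m)) (Set.mem_univ (y m))
    rw [Set.univ_inter, Set.univ_inter, Set.univ_inter] at key
    exact key

lemma exists_partition (γ : Path a b) (A B : I) (hAB : A ≤ B)
    (hfin : eVariationOn γ (Set.Icc A B) ≠ ⊤) {ε : ℝ} (hε : 0 < ε) :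
    ∃ (m : ℕ) (y : ℕ → I), Monotone y ∧ y 0 = A ∧ y m = B ∧ (∀ j, y j ∈ Set.Icc A B) ∧
      ∀ j, j < m → eVariationOn γ (Set.Icc (y j) (y (j+1)))
        ≤ edist (γ (y (j+1))) (γ (y j)) + ENNReal.ofReal ε := by
  by_cases hcase : eVariationOn γ (Set.Icc A B) ≤ ENNReal.ofReal ε
  · refine ⟨1, fun j => if j = 0 then A else B, ?_, rfl, rfl, ?_, ?_⟩
    · apply monotone_nat_of_le_succ
      intro n
      rcases Nat.eq_zero_or_pos n with hn | hn
      · subst hn; simpa using hAB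
      · simp [Nat.pos_iff_ne_zero.mp hn]
    · intro j
      rcases Nat.eq_zero_or_pos j with hn | hn
      · subst hn; exact ⟨le_rfl, hAB⟩
      · simp only [Nat.pos_iff_ne_zero.mp hn, if_false]
        exact ⟨hAB, le_rfl⟩
    · intro j hj
      interval_cases j
      simp only [if_pos rfl]
      calc eVariationOn γ (Set.Icc A (if (1:ℕ) = 0 then A else B))
          = eVariationOn γ (Set.Icc A B) := by norm_num
        _ ≤ ENNReal.ofReal ε := hcase
        _ ≤ _ := le_add_self
  · push_neg at hcase
    set V := eVariationOn γ (Set.Icc A B) with hV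
    have hVpos : V ≠ 0 := by
      intro h0
      rw [h0] at hcase
      exact (not_lt_of_ge zero_le) hcase
    have hsub : V - ENNReal.ofReal ε < V :=
      ENNReal.sub_lt_self hfin hVpos (ENNReal.ofReal_pos.mpr hε).ne'
    rw [hV, eVariationOn] at hsub
    obtain ⟨⟨n, u, hu, us⟩, hgt⟩ := lt_iSup_iff.mp hsub
    have hVle : V ≤ (∑ i ∈ Finset.range n, edist (γ (u (i+1))) (γ (u i))) + ENNReal.ofReal ε := by
      have h1 : V - ENNReal.ofReal ε
          < ∑ i ∈ Finset.range n, edist (γ (u (i+1))) (γ (u i)) := hgt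
      have h2 : V = (V - ENNReal.ofReal ε) + ENNReal.ofReal ε :=
        (tsub_add_cancel_of_le hcase.le).symm
      calc V = (V - ENNReal.ofReal ε) + ENNReal.ofReal ε := h2
        _ ≤ _ := add_le_add h1.le le_rfl
    classical
    set y : ℕ → I := fun j => if j = 0 then A else if j ≤ n + 1 then u (j - 1) else B with hy
    have hy0 : y 0 = A := rfl
    have hyend : y (n + 2) = B := by
      simp only [hy, if_neg (by omega : ¬ n + 2 = 0), if_neg (by omega : ¬ n + 2 ≤ n + 1)]
    have hmono : Monotone y := by
      apply monotone_nat_of_le_succ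
      intro j
      rcases Nat.eq_zero_or_pos j with h0 | h0
      · subst h0
        simp only [hy, if_pos rfl, if_neg (Nat.one_ne_zero), if_pos (by omega : 1 ≤ n + 1)]
        exact (us 0).1
      · have hj0 : j ≠ 0 := Nat.pos_iff_ne_zero.mp h0
        simp only [hy, if_neg hj0, if_neg (by omega : ¬ j + 1 = 0)]
        by_cases hj1 : j + 1 ≤ n + 1
        · rw [if_pos (by omega : j ≤ n + 1), if_pos hj1]
          have : j - 1 ≤ j + 1 - 1 := by omega
          exact hu this
        · rw [if_neg hj1]
          by_cases hj2 : j ≤ n + 1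
          · rw [if_pos hj2]
            exact (us (j-1)).2
          · rw [if_neg hj2]
    have hmem : ∀ j, y j ∈ Set.Icc A B := by
      intro j
      rcases Nat.eq_zero_or_pos j with h0 | h0
      · subst h0; exact ⟨le_rfl, hAB⟩
      · have hj0 : j ≠ 0 := Nat.pos_iff_ne_zero.mp h0
        simp only [hy, if_neg hj0]
        by_cases hj2 : j ≤ n + 1
        · rw [if_pos hj2]; exact us (j-1)
        · rw [if_neg hj2]; exact ⟨hAB, le_rfl⟩
    have hshift1 : ∀ i, i ≤ n → y (i + 1) = u i := by
      intro i hi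
      simp only [hy, if_neg (by omega : ¬ i + 1 = 0), if_pos (by omega : i + 1 ≤ n + 1),
        Nat.add_sub_cancel]
    refine ⟨n + 2, y, hmono, rfl, hyend, hmem, ?_⟩
    -- piece bounds
    set d : ℕ → ENNReal := fun j => edist (γ (y (j+1))) (γ (y j)) with hd
    have hsum_u_le : (∑ i ∈ Finset.range n, edist (γ (u (i+1))) (γ (u i)))
        ≤ ∑ j ∈ Finset.range (n+2), d j := by
      have e1 : (∑ i ∈ Finset.range n, edist (γ (u (i+1))) (γ (u i)))
          = ∑ i ∈ Finset.range n, d (i + 1) := by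
        apply Finset.sum_congr rfl
        intro i hi
        rw [Finset.mem_range] at hi
        rw [hd]
        simp only
        rw [hshift1 i (by omega), show i + 1 + 1 = (i+1) + 1 from rfl,
          hshift1 (i+1) (by omega)]
      rw [e1]
      have e2 : (∑ i ∈ Finset.range n, d (i + 1)) = ∑ j ∈ Finset.Ico 1 (n+1), d j := by
        rw [Finset.sum_Ico_eq_sum_range]
        simp only [Nat.add_sub_cancel]
        apply Finset.sum_congr rfl
        intro i _
        rw [Nat.add_comm 1 i]
      rw [e2]
      apply Finset.sum_le_sum_of_subset
      intro j hj
      rw [Finset.mem_Ico] at hj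
      rw [Finset.mem_range]
      omega
    have hsumVar : (∑ j ∈ Finset.range (n+2), eVariationOn γ (Set.Icc (y j) (y (j+1)))) = V := by
      rw [sum_eVar γ y hmono (n+2), hy0, hyend]
    have hd_le : ∀ j, d j ≤ eVariationOn γ (Set.Icc (y j) (y (j+1))) := by
      intro j
      exact eVariationOn.edist_le γ ⟨hmono (Nat.le_succ j), le_rfl⟩
        ⟨le_rfl, hmono (Nat.le_succ j)⟩
    intro j0 hj0
    have hj0mem : j0 ∈ Finset.range (n+2) := Finset.mem_range.mpr hj0
    set t := ∑ j ∈ (Finset.range (n+2)).erase j0, d j with ht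
    have htne : t ≠ ⊤ := by
      rw [ht]
      exact (ENNReal.sum_lt_top.mpr (fun j _ => edist_lt_top _ _)).ne
    have key1 : eVariationOn γ (Set.Icc (y j0) (y (j0+1))) + t ≤ V := by
      rw [← hsumVar, ← Finset.add_sum_erase _ _ hj0mem]
      apply add_le_add le_rfl
      exact Finset.sum_le_sum (fun j _ => hd_le j)
    have key2 : V ≤ (d j0 + ENNReal.ofReal ε) + t := by
      calc V ≤ (∑ i ∈ Finset.range n, edist (γ (u (i+1))) (γ (u i))) + ENNReal.ofReal ε := hVle
        _ ≤ (∑ j ∈ Finset.range (n+2), d j) + ENNReal.ofReal ε := add_le_add hsum_u_le le_rfl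
        _ = (d j0 + t) + ENNReal.ofReal ε := by rw [← Finset.add_sum_erase _ _ hj0mem]
        _ = (d j0 + ENNReal.ofReal ε) + t := by ring
    have := le_trans key1 key2
    exact (ENNReal.add_le_add_iff_right htne).mp this


end Part
end MacroscopicAux

namespace MacroscopicAux
open CategoryTheory

section Good
variable {M : Type*} [TopologicalSpace M] {x₀ : M}
variable (h : FundamentalGroup M x₀ →* Multiplicative ℤ) (c : ∀ a : M, Path x₀ a)
variable {p : M} (g : ∀ z : M, Path p z) {a b : M} (γ : Path a b)

/-- The value of the restricted segment is the "potential difference" of the endpoints. -/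
def Good (r s : I) : Prop :=
  valH h c ⟦seg γ r s⟧ = (valH h c ⟦g (γ r)⟧)⁻¹ * valH h c ⟦g (γ s)⟧

lemma good_self (r : I) : Good h c g γ r r := by
  rw [Good, seg_self]
  have : @Eq (FundamentalGroupoid.mk (γ r) ⟶ FundamentalGroupoid.mk (γ r))
      ⟦Path.refl (γ r)⟧ (𝟙 (FundamentalGroupoid.mk (γ r))) := rfl
  rw [this, valH_id]
  group

lemma good_trans (r m s : I) (h1 : Good h c g γ r m) (h2 : Good h c g γ m s) :
    Good h c g γ r s := by
  rw [Good] at h1 h2 ⊢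
  rw [seg_split γ r m s]; erw [valH_comp]; rw [h1, h2]
  group

lemma good_concat (y : ℕ → I) (m : ℕ) (hpieces : ∀ j, j < m → Good h c g γ (y j) (y (j+1))) :
    Good h c g γ (y 0) (y m) := by
  induction m with
  | zero => exact good_self h c g γ (y 0)
  | succ m ih =>
    exact good_trans h c g γ (y 0) (y m) (y (m+1))
      (ih (fun j hj => hpieces j (Nat.lt_succ_of_lt hj))) (hpieces m (Nat.lt_succ_self m))

end Good
end MacroscopicAux

open MacroscopicAux CategoryTheory in
/-- In a metric space where any two points are joined by paths of length arbitrarily close to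
their distance, if a homomorphism `h : π₁(M, x₀) → ℤ` vanishes on all classes of loops of
length less than `L`, then it vanishes on all classes of finite-length loops contained in a
ball `B(p, t)` with `2t < L`. -/
theorem vanishes_on_loops_in_small_balls {M : Type*} [MetricSpace M]
    (hgeo : ∀ p q : M, ∀ ε : ℝ, 0 < ε →
      ∃ γ : Path p q, pathLength γ < ENNReal.ofReal (dist p q + ε))
    (x₀ : M) (h : FundamentalGroup M x₀ →* Multiplicative ℤ) (L : ℝ) (hLpos : 0 < L)
    (hshort : ∀ (p : M) (γ : Path p p) (u : Path x₀ p), pathLength γ < ENNReal.ofReal L →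
      h (loopClass ((u.trans γ).trans u.symm)) = 1) :
    ∀ (p : M) (t : ℝ), 0 < t → 2 * t < L →
      ∀ (q : M) (γ : Path q q) (u : Path x₀ q), pathLength γ ≠ ⊤ →
        (∀ s : I, γ s ∈ Metric.ball p t) →
        h (loopClass ((u.trans γ).trans u.symm)) = 1 := by
  intro p t ht htL q γ u hfin himg
  set ε₀ : ℝ := (L - 2*t)/8 with hε₀def
  have hε₀ : 0 < ε₀ := by rw [hε₀def]; linarith
  choose c hcspec using fun z : M => hgeo x₀ z 1 one_pos
  choose g hgspec using fun z : M => hgeo p z ε₀ hε₀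
  clear hcspec
  -- short pieces in the ball are Good
  have good_piece : ∀ r s : I, r ≤ s →
      eVariationOn γ (Set.Icc r s) ≤ edist (γ s) (γ r) + ENNReal.ofReal ε₀ →
      edist (γ s) (γ r) ≤ ENNReal.ofReal ε₀ →
      Good h c g γ r s := by
    intro r s hrs hvar hd
    have hA : dist p (γ r) < t := by
      have := himg r; rw [Metric.mem_ball] at this; rw [dist_comm]; exact this
    have hB : dist p (γ s) < t := by
      have := himg s; rw [Metric.mem_ball] at this; rw [dist_comm]; exact this
    set lam : Path p p := ((g (γ r)).trans (seg γ r s)).trans (g (γ s)).symm with hlam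
    have hlen : pathLength lam < ENNReal.ofReal L := by
      rw [hlam, pathLength_trans, pathLength_trans, pathLength_symm]
      have h1 : pathLength (g (γ r)) ≤ ENNReal.ofReal (t + ε₀) :=
        le_of_lt (lt_of_lt_of_le (hgspec (γ r)) (ENNReal.ofReal_le_ofReal (by linarith)))
      have h3 : pathLength (g (γ s)) ≤ ENNReal.ofReal (t + ε₀) :=
        le_of_lt (lt_of_lt_of_le (hgspec (γ s)) (ENNReal.ofReal_le_ofReal (by linarith)))
      have h2 : pathLength (seg γ r s) ≤ ENNReal.ofReal (2*ε₀) := by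
        rw [seg_length γ r s hrs]
        calc eVariationOn γ (Set.Icc r s)
            ≤ edist (γ s) (γ r) + ENNReal.ofReal ε₀ := hvar
          _ ≤ ENNReal.ofReal ε₀ + ENNReal.ofReal ε₀ := add_le_add hd le_rfl
          _ = ENNReal.ofReal (2*ε₀) := by
              rw [← ENNReal.ofReal_add hε₀.le hε₀.le, two_mul]
      calc pathLength (g (γ r)) + pathLength (seg γ r s) + pathLength (g (γ s))
          ≤ ENNReal.ofReal (t + ε₀) + ENNReal.ofReal (2*ε₀) + ENNReal.ofReal (t + ε₀) :=
            add_le_add (add_le_add h1 h2) h3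
        _ = ENNReal.ofReal ((t + ε₀) + 2*ε₀ + (t + ε₀)) := by
            rw [← ENNReal.ofReal_add (by linarith) (by linarith),
              ← ENNReal.ofReal_add (by linarith) (by linarith)]
        _ < ENNReal.ofReal L := by
            rw [ENNReal.ofReal_lt_ofReal_iff hLpos]
            rw [hε₀def]; linarith
    have hval : valH h c ⟦lam⟧ = 1 := by
      rw [← valH_loop h c lam (c p)]
      exact hshort p lam (c p) hlen
    have hsplit : @Eq (FundamentalGroupoid.mk p ⟶ FundamentalGroupoid.mk p) ⟦lam⟧
        (((⟦g (γ r)⟧ : FundamentalGroupoid.mk p ⟶ FundamentalGroupoid.mk (γ r)) ≫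
          (⟦seg γ r s⟧ : FundamentalGroupoid.mk (γ r) ⟶ FundamentalGroupoid.mk (γ s))) ≫
          Groupoid.inv (⟦g (γ s)⟧ : FundamentalGroupoid.mk p ⟶ FundamentalGroupoid.mk (γ s))) := by
      rw [hlam, quot_trans, quot_trans, quot_symm]
    rw [hsplit] at hval; erw [valH_comp, valH_comp, valH_inv] at hval
    rw [Good]
    have hv : valH h c ⟦seg γ r s⟧
        = (valH h c ⟦g (γ r)⟧)⁻¹ *
          ((valH h c ⟦g (γ r)⟧ * valH h c ⟦seg γ r s⟧) * (valH h c ⟦g (γ s)⟧)⁻¹) *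
          valH h c ⟦g (γ s)⟧ := by group
    rw [hv, hval]
    group
  -- uniform continuity
  obtain ⟨δ, hδpos, hδ⟩ := Metric.uniformContinuous_iff.mp
    (CompactSpace.uniformContinuous_of_continuous γ.continuous) ε₀ hε₀
  obtain ⟨N, hN⟩ := exists_nat_one_div_lt hδpos
  have hN1 : (0:ℝ) < (N:ℝ) + 1 := by positivity
  set PP : ℕ → I := fun k => ⟨min ((k:ℝ)/((N:ℝ)+1)) 1,
    ⟨le_min (by positivity) zero_le_one, min_le_right _ _⟩⟩ with hPP
  have hPmono : Monotone PP := by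
    intro j k hjk
    show min ((j:ℝ)/((N:ℝ)+1)) 1 ≤ min ((k:ℝ)/((N:ℝ)+1)) 1
    apply min_le_min _ le_rfl
    gcongr
  have hP0 : PP 0 = 0 := by
    apply Subtype.ext
    show min (((0:ℕ):ℝ)/((N:ℝ)+1)) 1 = (0:ℝ)
    norm_num
  have hPN : PP (N+1) = 1 := by
    apply Subtype.ext
    show min ((((N+1):ℕ):ℝ)/((N:ℝ)+1)) 1 = (1:ℝ)
    push_cast
    rw [div_self (by positivity)]
    norm_num
  -- the width of each cell is at most 1/(N+1) < δ
  have hgap : ∀ k : ℕ, ∀ x y : I, x ∈ Set.Icc (PP k) (PP (k+1)) → y ∈ Set.Icc (PP k) (PP (k+1)) →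
      dist x y < δ := by
    intro k x y hx hy
    have hwidth : ((PP (k+1)):ℝ) - ((PP k):ℝ) ≤ 1/((N:ℝ)+1) := by
      show min ((((k+1):ℕ):ℝ)/((N:ℝ)+1)) 1 - min (((k:ℕ):ℝ)/((N:ℝ)+1)) 1 ≤ 1/((N:ℝ)+1)
      push_cast
      rcases le_total (((k:ℝ)+1)/((N:ℝ)+1)) 1 with hc | hc
      · rw [min_eq_left hc, min_eq_left (by
          apply le_trans _ hc
          gcongr
          linarith)]
        rw [div_sub_div_same]
        gcongr
        linarith
      · rw [min_eq_right hc]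
        rcases le_total ((k:ℝ)/((N:ℝ)+1)) 1 with hc2 | hc2
        · rw [min_eq_left hc2]
          have h5 : 1 - (k:ℝ)/((N:ℝ)+1) ≤ ((k:ℝ)+1)/((N:ℝ)+1) - (k:ℝ)/((N:ℝ)+1) := by gcongr
          have h6 : ((k:ℝ)+1)/((N:ℝ)+1) - (k:ℝ)/((N:ℝ)+1) = 1/((N:ℝ)+1) := by
            field_simp
            ring
          linarith
        · rw [min_eq_right hc2]
          simp
          positivity
    have hx1 : ((PP k):ℝ) ≤ x := hx.1
    have hx2 : (x:ℝ) ≤ ((PP (k+1)):ℝ) := hx.2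
    have hy1 : ((PP k):ℝ) ≤ y := hy.1
    have hy2 : (y:ℝ) ≤ ((PP (k+1)):ℝ) := hy.2
    rw [Subtype.dist_eq, Real.dist_eq]
    rw [abs_lt]
    constructor <;> nlinarith [hN]
  -- each grid cell is Good
  have cellGood : ∀ k : ℕ, Good h c g γ (PP k) (PP (k+1)) := by
    intro k
    have hAB : PP k ≤ PP (k+1) := hPmono (Nat.le_succ k)
    have hfin' : eVariationOn γ (Set.Icc (PP k) (PP (k+1))) ≠ ⊤ :=
      ne_top_of_le_ne_top hfin (eVariationOn.mono γ (Set.subset_univ _))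
    obtain ⟨m, y, hymono, hy0, hym, hymem, hpieces⟩ :=
      exists_partition γ _ _ hAB hfin' hε₀
    have hgood : Good h c g γ (y 0) (y m) := by
      apply good_concat h c g γ y m
      intro j hj
      apply good_piece (y j) (y (j+1)) (hymono (Nat.le_succ j)) (hpieces j hj)
      rw [edist_dist]
      apply ENNReal.ofReal_le_ofReal
      exact le_of_lt (hδ (hgap k _ _ (hymem (j+1)) (hymem j)))
    rwa [hy0, hym] at hgood
  -- assemble
  have hGood01 : Good h c g γ (PP 0) (PP (N+1)) := by
    apply good_concat h c g γ PP (N+1)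
    intro k _
    exact cellGood k
  rw [hP0, hPN, Good, seg_zero_one, valH_cast] at hGood01
  have e0 : γ (0:I) = q := γ.source
  have e1 : γ (1:I) = q := γ.target
  rw [show valH h c ⟦g (γ (0:I))⟧ = valH h c ⟦g q⟧ from by rw [e0],
    show valH h c ⟦g (γ (1:I))⟧ = valH h c ⟦g q⟧ from by rw [e1]] at hGood01
  rw [valH_loop h c γ u, hGood01]
  group
end
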